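/- arXiv:2505.06005 — 8 statements merged into one kernel-verified Lean document; each statement's English description precedes it below -/
import Mathlib

section
/- Let G be a finite simple bipartite graph with parts A and B such that every vertex of A has degree 3 and every vertex of B has degree 2, and let n = |A| (so |B| = 3n/2). Let μ(G) denote the maximum size of a subset B' ⊆ B whose vertices have pairwise disjoint neighborhoods in G. Then there exists a set S ⊆ B with |S| ≤ n/2 such that the bipartite subgraph of G induced on A ∪ (B \ S) contains a matching saturating every vertex of A, and |N(S)| = n/2 + μ(G). -/
open Finset

/-- The vertices of `B'` have pairwise disjoint neighborhoods in `G`. -/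
def PDisjNbrs {V : Type*} (G : SimpleGraph V) (B' : Finset V) : Prop :=
  ∀ b₁ ∈ B', ∀ b₂ ∈ B', b₁ ≠ b₂ → ∀ a, ¬(G.Adj a b₁ ∧ G.Adj a b₂)

/-- `N(S)`: the vertices of `A` adjacent to at least one vertex of `S`. -/
def nbhd {V : Type*} [DecidableEq V] (G : SimpleGraph V) [DecidableRel G.Adj]
    (A S : Finset V) : Finset V :=
  A.filter fun a => ∃ b ∈ S, G.Adj a b

/-- The bipartite subgraph of `G` induced on `A ∪ C` contains a matching saturating
every vertex of `A`, encoded by an injective choice of partners. -/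
def SatMatch {V : Type*} (G : SimpleGraph V) (A C : Finset V) : Prop :=
  ∃ f : V → V, Set.InjOn f ↑A ∧ ∀ a ∈ A, f a ∈ C ∧ G.Adj a (f a)

/-!
Read each `b ∈ B` as an edge between its two neighbours: `G` is the incidence graph of a cubic
multigraph on `A`, and sets with pairwise disjoint neighbourhoods are its matchings. Take a maximum
one, `M`. Every `a ∈ A` keeps at least two neighbours in `B \ M`, so `B \ M` satisfies Hall's
condition for `A`, with surplus `n/2 - μ`. Remove the surplus one vertex at a time, each time one
adjacent to a vertex `u` that still has all three of its neighbours, chosen so that Hall's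
condition survives: tight sets, those `X` with `|N(X)| = |X|`, are closed under union, and
removing an edge outside the neighbourhood of the greatest one is harmless. Then `u` was not yet
covered, and by maximality of `M` it is the only neighbour of the removed vertex outside `N(M)`;
so every removal enlarges the neighbourhood by exactly one, and `|N(S)| = 2μ + (n/2 - μ)`.
-/
section

variable {V : Type*} [DecidableEq V] (G : SimpleGraph V) [DecidableRel G.Adj]

lemma nbhd_mono {A S T : Finset V} (h : S ⊆ T) : nbhd G A S ⊆ nbhd G A T := by
  intro a
  simp only [nbhd, mem_filter]
  exact fun ⟨ha, b, hb, hab⟩ => ⟨ha, b, h hb, hab⟩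

lemma nbhd_union (A S T : Finset V) : nbhd G A (S ∪ T) = nbhd G A S ∪ nbhd G A T := by
  simp only [nbhd, ← filter_or, mem_union, or_and_right, exists_or]

lemma nbhd_erase (A S : Finset V) (a : V) : nbhd G (A.erase a) S = (nbhd G A S).erase a :=
  filter_erase _ _ _

lemma card_nbhd_union_add_card_nbhd_inter_le (C X Y : Finset V) :
    #(nbhd G C (X ∪ Y)) + #(nbhd G C (X ∩ Y)) ≤ #(nbhd G C X) + #(nbhd G C Y) := by
  rw [nbhd_union, ← card_union_add_card_inter (nbhd G C X)]
  exact Nat.add_le_add_left (card_le_card <|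
    subset_inter (nbhd_mono G inter_subset_left) (nbhd_mono G inter_subset_right)) _

def HallCondition (A C : Finset V) : Prop := ∀ X ⊆ A, #X ≤ #(nbhd G C X)

lemma satMatch_of_hallCondition {A C : Finset V} (h : HallCondition G A C) :
    SatMatch G A C := by
  obtain ⟨f, hf, hfC⟩ := (all_card_le_biUnion_card_iff_exists_injective
    fun a : A => {c ∈ C | G.Adj a c}).1 fun s : Finset A => by
      have hs := h (s.map (.subtype _)) fun _ => property_of_mem_map_subtype s
      convert hs using 1
      · simp
      · congr 1
        ext c
        simp only [nbhd, G.adj_comm c, mem_biUnion, mem_filter, mem_map]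
        aesop
  refine ⟨fun v => if hv : v ∈ A then f ⟨v, hv⟩ else v, fun x hx y hy hxy => ?_,
    fun a ha => ?_⟩
  · simp only [dif_pos (mem_coe.1 hx), dif_pos (mem_coe.1 hy)] at hxy
    exact congrArg Subtype.val (hf hxy)
  · simpa [dif_pos ha] using hfC ⟨a, ha⟩

lemma hallCondition_of_le_card_filter_adj {A C : Finset V} {k : ℕ} (hk : 0 < k)
    (hA : ∀ a ∈ A, k ≤ #{c ∈ C | G.Adj a c})
    (hC : ∀ c ∈ C, #{a ∈ A | G.Adj c a} ≤ k) :
    HallCondition G A C := by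
  intro X hX
  refine Nat.le_of_mul_le_mul_right (card_mul_le_card_mul G.Adj (t := nbhd G C X)
    (fun a ha => (hA a (hX ha)).trans (card_le_card fun c hc => ?_))
    (fun c hc => (card_le_card fun a ha => ?_).trans (hC c (mem_filter.1 hc).1))) hk
  · simp only [mem_filter] at hc
    simp only [bipartiteAbove, nbhd, mem_filter]
    exact ⟨⟨hc.1, a, ha, hc.2.symm⟩, hc.2⟩
  · simp only [bipartiteBelow, mem_filter] at ha ⊢
    exact ⟨hX ha.1, ha.2.symm⟩

variable {G} {A C : Finset V}

lemma HallCondition.card_nbhd_union_eq (hHall : HallCondition G A C) {X Y : Finset V}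
    (hX : X ⊆ A) (hY : Y ⊆ A) (hXt : #(nbhd G C X) = #X) (hYt : #(nbhd G C Y) = #Y) :
    #(nbhd G C (X ∪ Y)) = #(X ∪ Y) := by
  have := card_nbhd_union_add_card_nbhd_inter_le G C X Y
  have := hHall _ (union_subset hX hY)
  have := hHall (X ∩ Y) (inter_subset_left.trans hX)
  have := card_union_add_card_inter X Y
  omega

lemma HallCondition.exists_greatest_tight (hHall : HallCondition G A C) :
    ∃ T ⊆ A, #(nbhd G C T) = #T ∧ ∀ X ⊆ A, #(nbhd G C X) = #X → X ⊆ T := by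
  obtain ⟨T, hT, hmax⟩ := exists_max_image {X ∈ A.powerset | #(nbhd G C X) = #X} card
    ⟨∅, mem_filter.2 ⟨empty_mem_powerset _, by simp [nbhd]⟩⟩
  simp only [mem_filter, mem_powerset] at hT hmax
  refine ⟨T, hT.1, hT.2, fun X hX hXt => ?_⟩
  have hXT := hmax _ ⟨union_subset hX hT.1, hHall.card_nbhd_union_eq hX hT.1 hXt hT.2⟩
  rw [eq_of_subset_of_card_le subset_union_right hXT]
  exact subset_union_left

lemma HallCondition.exists_adj_notMem_nbhd (hHall : HallCondition G A C) {T : Finset V}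
    (hT : T ⊆ A) (hTt : #(nbhd G C T) = #T) {u : V} (hu : u ∈ A) (huT : u ∉ T) :
    ∃ c ∈ C, G.Adj u c ∧ c ∉ nbhd G C T := by
  by_contra! h
  have hsub : nbhd G C (insert u T) ⊆ nbhd G C T := by
    intro c hc
    simp only [nbhd, mem_filter, mem_insert, exists_eq_or_imp] at hc
    obtain ⟨hcC, hcu | hcT⟩ := hc
    · exact h c hcC hcu.symm
    · exact mem_filter.2 ⟨hcC, hcT⟩
  have := hHall _ (insert_subset hu hT)
  have := card_le_card hsub
  rw [card_insert_of_notMem huT] at *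
  omega

lemma HallCondition.erase (hHall : HallCondition G A C) {T : Finset V}
    (hT : ∀ X ⊆ A, #(nbhd G C X) = #X → X ⊆ T) {c : V} (hc : c ∉ nbhd G C T) :
    HallCondition G A (C.erase c) := by
  intro X hX
  rw [nbhd_erase]
  by_cases hcX : c ∈ nbhd G C X
  · have hlt : #X < #(nbhd G C X) :=
      (hHall X hX).lt_of_ne fun hXt => hc (nbhd_mono G (hT X hX hXt.symm) hcX)
    rw [card_erase_of_mem hcX]
    omega
  · rw [erase_eq_of_notMem hcX]
    exact hHall X hX

lemma card_le_of_card_filter_adj_le_two {T : Finset V} (hT : T ⊆ A)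
    (hTt : #(nbhd G C T) = #T) (hC : ∀ c ∈ C, 2 ≤ #{a ∈ A | G.Adj c a})
    (hA : ∀ a ∈ A \ T, #{c ∈ C | G.Adj a c} ≤ 2) : #C ≤ #A := by
  set C' := C \ nbhd G C T
  have hC' : #C' * 2 ≤ #(A \ T) * 2 := by
    refine card_mul_le_card_mul' G.Adj (fun c hc => ?_) fun a ha =>
      (card_le_card (filter_subset_filter _ sdiff_subset)).trans (hA a ha)
    obtain ⟨hcC, hcT⟩ := mem_sdiff.1 hc
    refine (hC c hcC).trans (card_le_card fun a ha => ?_)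
    simp only [bipartiteBelow, mem_filter, mem_sdiff] at ha ⊢
    exact ⟨⟨ha.1, fun haT => hcT (mem_filter.2 ⟨hcC, a, haT, ha.2⟩)⟩, ha.2.symm⟩
  have hCsplit : #C' + #(nbhd G C T) = #C := card_sdiff_add_card_eq_card (filter_subset _ C)
  have hAsplit : #(A \ T) + #T = #A := card_sdiff_add_card_eq_card hT
  omega

lemma HallCondition.exists_erase (hHall : HallCondition G A C)
    (hC : ∀ c ∈ C, 2 ≤ #{a ∈ A | G.Adj c a}) (hlt : #A < #C) :
    ∃ u ∈ A, 2 < #{c ∈ C | G.Adj u c} ∧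
      ∃ c ∈ C, G.Adj u c ∧ HallCondition G A (C.erase c) := by
  obtain ⟨T, hTA, hTt, hT⟩ := hHall.exists_greatest_tight
  obtain ⟨u, hu, hdeg⟩ : ∃ u ∈ A \ T, 2 < #{c ∈ C | G.Adj u c} := by
    by_contra! h
    exact hlt.not_ge (card_le_of_card_filter_adj_le_two hTA hTt hC h)
  obtain ⟨huA, huT⟩ := mem_sdiff.1 hu
  obtain ⟨c, hc, hadj, hcT⟩ := hHall.exists_adj_notMem_nbhd hTA hTt huA huT
  exact ⟨u, huA, hdeg, c, hc, hadj, hHall.erase hT hcT⟩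

end

lemma card_filter_adj_eq_degree {V : Type*} {G : SimpleGraph V} [DecidableRel G.Adj] {v : V}
    [Fintype (G.neighborSet v)] {X : Finset V} (h : ∀ w, G.Adj v w → w ∈ X) :
    #{w ∈ X | G.Adj v w} = G.degree v := by
  rw [← G.card_neighborFinset_eq_degree]
  congr 1
  ext w
  simpa using fun hvw => h w hvw

namespace PDisjNbrs

variable {V : Type*} [DecidableEq V] {G : SimpleGraph V} {M : Finset V}

lemma insert (hM : PDisjNbrs G M) {c : V} (hc : ∀ a, G.Adj a c → ∀ m ∈ M, ¬G.Adj a m) :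
    PDisjNbrs G (insert c M) := by
  intro b₁ hb₁ b₂ hb₂ hne a ⟨h₁, h₂⟩
  rcases mem_insert.1 hb₁ with rfl | hM₁ <;> rcases mem_insert.1 hb₂ with rfl | hM₂
  · exact hne rfl
  · exact hc a h₁ b₂ hM₂ h₂
  · exact hc a h₂ b₁ hM₁ h₁
  · exact hM b₁ hM₁ b₂ hM₂ hne a ⟨h₁, h₂⟩

variable [DecidableRel G.Adj]

lemma card_filter_adj_le_one (hM : PDisjNbrs G M) (a : V) : #{m ∈ M | G.Adj a m} ≤ 1 := by
  refine card_le_one.2 fun m₁ h₁ m₂ h₂ => ?_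
  rw [mem_filter] at h₁ h₂
  by_contra hne
  exact hM m₁ h₁.1 m₂ h₂.1 hne a ⟨h₁.2, h₂.2⟩

lemma card_nbhd {A : Finset V} {k : ℕ} (hM : PDisjNbrs G M)
    (hk : ∀ m ∈ M, #{a ∈ A | G.Adj m a} = k) : #(nbhd G A M) = k * #M := by
  have := card_mul_eq_card_mul G.Adj (s := nbhd G A M) (t := M) (m := 1) (n := k)
    (fun a ha => (hM.card_filter_adj_le_one a).antisymm <| one_le_card.2 <| by
      obtain ⟨-, m, hm, ham⟩ := mem_filter.1 ha
      exact ⟨m, mem_filter.2 ⟨hm, ham⟩⟩)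
    (fun m hm => by
      rw [← hk m hm]
      congr 1
      ext a
      simp only [bipartiteBelow, nbhd, mem_filter, G.adj_comm a m]
      exact ⟨fun h => ⟨h.1.1, h.2⟩, fun h => ⟨⟨h.1, m, hm, h.2.symm⟩, h.2⟩⟩)
  linarith

lemma card_filter_adj_le_card_filter_adj_sdiff_add_one (hM : PDisjNbrs G M) (B : Finset V)
    (a : V) : #{b ∈ B | G.Adj a b} ≤ #{b ∈ B \ M | G.Adj a b} + 1 := by
  have hsub : {b ∈ B | G.Adj a b} ⊆ {b ∈ B \ M | G.Adj a b} ∪ {b ∈ M | G.Adj a b} := by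
    intro b
    simp only [mem_filter, mem_union, mem_sdiff]
    tauto
  exact (card_le_card hsub).trans <| (card_union_le _ _).trans <|
    Nat.add_le_add_left (hM.card_filter_adj_le_one a) _

lemma hallCondition_sdiff {A B : Finset V} {k : ℕ} (hM : PDisjNbrs G M) (hk : 0 < k)
    (hA : ∀ a ∈ A, k + 1 ≤ #{b ∈ B | G.Adj a b})
    (hB : ∀ b ∈ B, #{a ∈ A | G.Adj b a} ≤ k) :
    HallCondition G A (B \ M) :=
  hallCondition_of_le_card_filter_adj G hk
    (fun a ha => by
      have := hA a ha
      have := hM.card_filter_adj_le_card_filter_adj_sdiff_add_one B a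
      omega)
    fun b hb => hB b (mem_sdiff.1 hb).1

end PDisjNbrs

section

variable {V : Type*} [DecidableEq V] {G : SimpleGraph V} [DecidableRel G.Adj]
  {A B M : Finset V}

lemma notMem_nbhd_of_card_filter_adj_le {S : Finset V} (hSB : S ⊆ B) {u : V}
    (h : #{b ∈ B | G.Adj u b} ≤ #{b ∈ B \ S | G.Adj u b}) : u ∉ nbhd G A S := by
  have hN := eq_of_subset_of_card_le (filter_subset_filter _ sdiff_subset) h
  intro hu
  obtain ⟨-, s, hs, hus⟩ := mem_filter.1 hu
  have hs' := hN ▸ mem_filter.2 ⟨hSB hs, hus⟩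
  exact (mem_sdiff.1 (mem_filter.1 hs').1).2 hs

lemma eq_of_adj_of_notMem_nbhd (hB : ∀ b ∈ B, #{a ∈ A | G.Adj b a} = 2)
    (hBA : ∀ b ∈ B, ∀ a, G.Adj b a → a ∈ A) (hMB : M ⊆ B) (hM : PDisjNbrs G M)
    (hmax : ∀ B' ⊆ B, PDisjNbrs G B' → #B' ≤ #M) {c a₁ a₂ : V} (hc : c ∈ B \ M)
    (h₁ : a₁ ∉ nbhd G A M) (h₂ : a₂ ∉ nbhd G A M) (hc₁ : G.Adj c a₁)
    (hc₂ : G.Adj c a₂) :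
    a₁ = a₂ := by
  obtain ⟨hcB, hcM⟩ := mem_sdiff.1 hc
  by_contra hne
  have hN : {a ∈ A | G.Adj c a} = {a₁, a₂} := by
    refine (eq_of_subset_of_card_le ?_ (by rw [hB c hcB, card_pair hne])).symm
    simp only [insert_subset_iff, singleton_subset_iff, mem_filter]
    exact ⟨⟨hBA c hcB a₁ hc₁, hc₁⟩, hBA c hcB a₂ hc₂, hc₂⟩
  have hins : PDisjNbrs G (insert c M) := hM.insert fun a hac m hm ham => by
    have haA := hBA c hcB a hac.symm
    have ha : a ∈ ({a₁, a₂} : Finset V) := hN ▸ mem_filter.2 ⟨haA, hac.symm⟩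
    have haN : a ∈ nbhd G A M := mem_filter.2 ⟨haA, m, hm, ham⟩
    rcases mem_insert.1 ha with rfl | ha
    · exact h₁ haN
    · exact h₂ (mem_singleton.1 ha ▸ haN)
  have := hmax _ (insert_subset hcB hMB) hins
  rw [card_insert_of_notMem hcM] at this
  omega

lemma exists_insert_hallCondition (hA : ∀ a ∈ A, #{b ∈ B | G.Adj a b} = 3)
    (hB : ∀ b ∈ B, #{a ∈ A | G.Adj b a} = 2) (hBA : ∀ b ∈ B, ∀ a, G.Adj b a → a ∈ A)
    (hMB : M ⊆ B) (hM : PDisjNbrs G M) (hmax : ∀ B' ⊆ B, PDisjNbrs G B' → #B' ≤ #M)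
    {S : Finset V} (hMS : M ⊆ S) (hSB : S ⊆ B) (hHall : HallCondition G A (B \ S))
    (hlt : #A < #(B \ S)) :
    ∃ c ∈ B \ S, HallCondition G A (B \ insert c S) ∧
      #(nbhd G A (insert c S)) = #(nbhd G A S) + 1 := by
  obtain ⟨u, hu, hdeg, c, hc, huc, hHall'⟩ :=
    hHall.exists_erase (fun c hc => (hB c (mem_sdiff.1 hc).1).ge) hlt
  have huS : u ∉ nbhd G A S := notMem_nbhd_of_card_filter_adj_le hSB (by rw [hA u hu]; omega)
  have hcM : c ∈ B \ M := sdiff_subset_sdiff subset_rfl hMS hc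
  have hcN : ∀ {a}, G.Adj a c → a ∉ nbhd G A S → a = u := fun hac haS =>
    eq_of_adj_of_notMem_nbhd hB hBA hMB hM hmax hcM (fun haM => haS (nbhd_mono G hMS haM))
      (fun huM => huS (nbhd_mono G hMS huM)) hac.symm huc.symm
  have hN : nbhd G A (insert c S) = insert u (nbhd G A S) := by
    ext a
    rw [mem_insert]
    constructor
    · intro ha
      obtain ⟨haA, b, hb, hab⟩ := mem_filter.1 ha
      rcases mem_insert.1 hb with rfl | hbS
      · exact or_iff_not_imp_right.2 (hcN hab)
      · exact .inr (mem_filter.2 ⟨haA, b, hbS, hab⟩)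
    · rintro (rfl | haS)
      · exact mem_filter.2 ⟨hu, c, mem_insert_self c S, huc⟩
      · exact nbhd_mono G (subset_insert c S) haS
  exact ⟨c, hc, by rwa [sdiff_insert], by rw [hN, card_insert_of_notMem huS]⟩

lemma exists_hallCondition_card_sdiff_eq (hA : ∀ a ∈ A, #{b ∈ B | G.Adj a b} = 3)
    (hB : ∀ b ∈ B, #{a ∈ A | G.Adj b a} = 2) (hBA : ∀ b ∈ B, ∀ a, G.Adj b a → a ∈ A)
    (hMB : M ⊆ B) (hM : PDisjNbrs G M) (hmax : ∀ B' ⊆ B, PDisjNbrs G B' → #B' ≤ #M) :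
    ∃ S ⊆ B, HallCondition G A (B \ S) ∧ #(nbhd G A S) = #S + #M ∧ #(B \ S) = #A := by
  classical
  have hHallM : HallCondition G A (B \ M) :=
    hM.hallCondition_sdiff two_pos (fun a ha => (hA a ha).ge) fun b hb => (hB b hb).le
  obtain ⟨S, hS, hSmax⟩ := exists_max_image
    {S ∈ B.powerset | HallCondition G A (B \ S) ∧ #(nbhd G A S) = #S + #M ∧ M ⊆ S} card
    ⟨M, mem_filter.2 ⟨mem_powerset.2 hMB, hHallM,
      by rw [hM.card_nbhd fun m hm => hB m (hMB hm)]; ring, subset_rfl⟩⟩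
  simp only [mem_filter, mem_powerset] at hS hSmax
  obtain ⟨hSB, hHall, hN, hMS⟩ := hS
  refine ⟨S, hSB, hHall, hN, le_antisymm (not_lt.1 fun hlt => ?_)
    ((hHall A subset_rfl).trans (card_le_card (filter_subset _ _)))⟩
  obtain ⟨c, hc, hHall', hN'⟩ :=
    exists_insert_hallCondition hA hB hBA hMB hM hmax hMS hSB hHall hlt
  have hcS := (mem_sdiff.1 hc).2
  have := hSmax (insert c S) ⟨insert_subset (mem_sdiff.1 hc).1 hSB, hHall',
    by rw [hN', hN, card_insert_of_notMem hcS]; ring, hMS.trans (subset_insert c S)⟩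
  rw [card_insert_of_notMem hcS] at this
  omega

end

theorem stmt_0 {V : Type*} [Fintype V] [DecidableEq V] (G : SimpleGraph V)
    [DecidableRel G.Adj] (A B : Finset V) (hdisj : Disjoint A B)
    (hbip : ∀ v w, G.Adj v w → (v ∈ A ∧ w ∈ B) ∨ (v ∈ B ∧ w ∈ A))
    (hdegA : ∀ a ∈ A, G.degree a = 3) (hdegB : ∀ b ∈ B, G.degree b = 2)
    (mu : ℕ) (hmu₁ : ∃ B' ⊆ B, PDisjNbrs G B' ∧ B'.card = mu)
    (hmu₂ : ∀ B' ⊆ B, PDisjNbrs G B' → B'.card ≤ mu) :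
    ∃ S ⊆ B, S.card ≤ A.card / 2 ∧ SatMatch G A (B \ S) ∧
      (nbhd G A S).card = A.card / 2 + mu := by
  obtain ⟨M, hMB, hM, rfl⟩ := hmu₁
  have hAB : ∀ a ∈ A, ∀ b, G.Adj a b → b ∈ B := fun a ha b hab =>
    ((hbip a b hab).resolve_right fun h => disjoint_left.1 hdisj ha h.1).2
  have hBA : ∀ b ∈ B, ∀ a, G.Adj b a → a ∈ A := fun b hb a hba =>
    ((hbip b a hba).resolve_left fun h => disjoint_left.1 hdisj h.1 hb).2
  have hA : ∀ a ∈ A, #{b ∈ B | G.Adj a b} = 3 := fun a ha =>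
    (card_filter_adj_eq_degree (hAB a ha)).trans (hdegA a ha)
  have hB : ∀ b ∈ B, #{a ∈ A | G.Adj b a} = 2 := fun b hb =>
    (card_filter_adj_eq_degree (hBA b hb)).trans (hdegB b hb)
  have hcount : #A * 3 = #B * 2 := card_mul_eq_card_mul G.Adj hA fun b hb => by
    simpa only [bipartiteBelow, G.adj_comm _ b] using hB b hb
  obtain ⟨S, hSB, hHall, hN, hBS⟩ := exists_hallCondition_card_sdiff_eq hA hB hBA hMB hM hmu₂
  have hS : #S = #A / 2 := by
    have := card_sdiff_add_card_eq_card hSB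
    omega
  exact ⟨S, hSB, hS.le, satMatch_of_hallCondition G hHall, by omega⟩
end

section
/- Let G be a finite simple bipartite graph with parts A and B such that every vertex of B has degree 2. Let μ(G) denote the maximum size of a subset of B whose vertices have pairwise disjoint neighborhoods in G. Then for every subset T ⊆ B, we have |N(T)| ≤ |T| + μ(G). -/
open Finset

theorem stmt_1 {V : Type*} [Fintype V] [DecidableEq V] (G : SimpleGraph V)
    [DecidableRel G.Adj] (A B : Finset V) (hdisj : Disjoint A B)
    (hbip : ∀ v w, G.Adj v w → (v ∈ A ∧ w ∈ B) ∨ (v ∈ B ∧ w ∈ A))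
    (hdegB : ∀ b ∈ B, G.degree b = 2)
    (mu : ℕ) (hmu₁ : ∃ B' ⊆ B, PDisjNbrs G B' ∧ B'.card = mu)
    (hmu₂ : ∀ B' ⊆ B, PDisjNbrs G B' → B'.card ≤ mu) :
    ∀ T ⊆ B, (nbhd G A T).card ≤ T.card + mu := by

  intro T hT
  suffices h : ∃ B' ⊆ T, PDisjNbrs G B' ∧ (nbhd G A T).card ≤ T.card + B'.card by
    obtain ⟨B', hB'T, hpd, hle⟩ := h
    have := hmu₂ B' (hB'T.trans hT) hpd
    omega
  clear hmu₁ hmu₂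
  induction T using Finset.induction_on with
  | empty =>
    refine ⟨∅, Finset.Subset.refl _, ?_, by simp [nbhd]⟩
    intro b₁ h; simp at h
  | @insert b T' hb ih =>
    have hT' : T' ⊆ B := fun x hx => hT (Finset.mem_insert_of_mem hx)
    obtain ⟨B', hB'T, hpd, hle⟩ := ih hT'
    have hbB : b ∈ B := hT (Finset.mem_insert_self b T')
    have hsplit : nbhd G A (insert b T') = nbhd G A {b} ∪ nbhd G A T' := by
      ext a
      simp only [nbhd, Finset.mem_filter, Finset.mem_union, Finset.mem_insert,
        Finset.mem_singleton]
      constructor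
      · rintro ⟨ha, x, hx | hx, hadj⟩
        · exact Or.inl ⟨ha, x, by simp [hx], hadj⟩
        · exact Or.inr ⟨ha, x, hx, hadj⟩
      · rintro (⟨ha, x, hx, hadj⟩ | ⟨ha, x, hx, hadj⟩)
        · exact ⟨ha, x, Or.inl hx, hadj⟩
        · exact ⟨ha, x, Or.inr hx, hadj⟩
    have hNb : (nbhd G A {b}).card ≤ 2 := by
      have hsub : nbhd G A {b} ⊆ G.neighborFinset b := by
        intro a ha
        simp only [nbhd, Finset.mem_filter, Finset.mem_singleton] at ha
        obtain ⟨-, x, rfl, hadj⟩ := ha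
        simpa [SimpleGraph.mem_neighborFinset] using hadj.symm
      calc (nbhd G A {b}).card ≤ (G.neighborFinset b).card := Finset.card_le_card hsub
        _ = 2 := by rw [G.card_neighborFinset_eq_degree]; exact hdegB b hbB
    have hcard : (nbhd G A (insert b T')).card ≤
        (nbhd G A T').card + (nbhd G A {b} \ nbhd G A T').card := by
      rw [hsplit, Finset.union_comm, ← Finset.union_sdiff_self_eq_union]
      exact Finset.card_union_le _ _
    have hTcard : (insert b T').card = T'.card + 1 := Finset.card_insert_of_notMem hb
    by_cases hk : (nbhd G A {b} \ nbhd G A T').card ≤ 1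
    · exact ⟨B', hB'T.trans (Finset.subset_insert _ _), hpd, by omega⟩
    · have hsd : nbhd G A {b} \ nbhd G A T' = nbhd G A {b} := by
        apply Finset.eq_of_subset_of_card_le (Finset.sdiff_subset)
        omega
      have hdisjN : Disjoint (nbhd G A {b}) (nbhd G A T') :=
        Finset.sdiff_eq_self_iff_disjoint.mp hsd
      have hbB' : b ∉ B' := fun h => hb (hB'T h)
      refine ⟨insert b B', Finset.insert_subset_insert _ hB'T, ?_, ?_⟩
      · intro b₁ h₁ b₂ h₂ hne a ⟨ha₁, ha₂⟩
        have haA : ∀ c, c ∈ B → G.Adj a c → a ∈ A := by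
          intro c hc hadj
          rcases hbip a c hadj with ⟨h1, h2⟩ | ⟨h1, h2⟩
          · exact h1
          · exact absurd hc (Finset.disjoint_left.mp hdisj h2)
        have key : ∀ c ∈ B', G.Adj a c → G.Adj a b → False := by
          intro c hc hadjc hadjb
          have haA' : a ∈ A := haA b hbB hadjb
          have h1 : a ∈ nbhd G A {b} := by
            simp [nbhd, haA', hadjb]
          have h2 : a ∈ nbhd G A T' := by
            simp only [nbhd, Finset.mem_filter]
            exact ⟨haA', c, hB'T hc, hadjc⟩
          exact Finset.disjoint_left.mp hdisjN h1 h2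
        rcases Finset.mem_insert.mp h₁ with h₁e | h₁m
        · rcases Finset.mem_insert.mp h₂ with h₂e | h₂m
          · exact hne (h₁e.trans h₂e.symm)
          · exact key b₂ h₂m ha₂ (h₁e ▸ ha₁)
        · rcases Finset.mem_insert.mp h₂ with h₂e | h₂m
          · exact key b₁ h₁m ha₁ (h₂e ▸ ha₂)
          · exact hpd b₁ h₁m b₂ h₂m hne a ⟨ha₁, ha₂⟩
      · have h1 : (insert b B').card = B'.card + 1 := Finset.card_insert_of_notMem hbB'
        have h2 : (nbhd G A {b} \ nbhd G A T').card = (nbhd G A {b}).card := by rw [hsd]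
        omega
end

section
/- Let G be a finite simple bipartite graph with parts A and B such that every vertex of A has degree 3 and every vertex of B has degree 2, and let n = |A|. Then there exists a subset B' ⊆ B whose vertices have pairwise disjoint neighborhoods in G and with |B'| ≥ 2n/5. (This is the multigraph version of the statement that every 3-regular multigraph on n vertices has a matching of size at least 2n/5, encoded via the bipartite incidence graph.) -/
/-!
Read `B` as the edge set of a cubic multigraph on `A`; a set `B'` with pairwise disjoint
neighbourhoods is a matching, so we need a matching of size at least `2n/5`. By the Tutte–Berge
formula (obtained from Tutte's theorem by joining `d` universal vertices) it suffices that
deleting any set `S` of vertices leaves at most `|S| + n/5` odd components. The number of edges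
leaving a component `C` has the parity of `3|C|`, and it is `3` when `|C| = 1`, so every odd
component satisfies `5 ≤ 2|δ(C)| + |C|`. The cuts `δ(C)` are disjoint and end in `S`, so they
carry at most `3|S|` edges, while the components have at most `n - |S|` vertices; summing gives
`5 · odd ≤ 5|S| + n`.
-/

open Finset

namespace SimpleGraph

section TutteBerge

variable {V W : Type*}

theorem Iso.ncard_oddComponents {G : SimpleGraph V} {G' : SimpleGraph W} (φ : G ≃g G') :
    G'.oddComponents.ncard = G.oddComponents.ncard := by
  have himage : G'.oddComponents = φ.connectedComponentEquiv '' G.oddComponents := by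
    ext c
    obtain ⟨c, rfl⟩ := φ.connectedComponentEquiv.surjective c
    simp only [Set.mem_ofPred_eq, φ.connectedComponentEquiv.injective.mem_set_image]
    rw [← Nat.card_coe_set_eq, ← Nat.card_coe_set_eq,
      Nat.card_congr (ConnectedComponent.isoEquivSupp φ c)]
  rw [himage, Set.ncard_image_of_injective _ φ.connectedComponentEquiv.injective]

theorem ncard_oddComponents_deleteVerts_add_ncard_mod_two [Finite V] (G : SimpleGraph V)
    (u : Set V) :
    (((⊤ : G.Subgraph).deleteVerts u).coe.oddComponents.ncard + u.ncard) % 2 =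
      Nat.card V % 2 := by
  have hodd := odd_ncard_oddComponents ((⊤ : G.Subgraph).deleteVerts u).coe
  have hcard : Nat.card ((⊤ : G.Subgraph).deleteVerts u).verts + u.ncard = Nat.card V := by
    rw [Subgraph.deleteVerts_verts, Subgraph.verts_top, ← Set.compl_eq_univ_sdiff,
      Nat.card_coe_set_eq, add_comm, Set.ncard_add_ncard_compl]
  rw [Nat.odd_iff, Nat.odd_iff] at hodd
  omega

def joinComplete (H : SimpleGraph W) (k : ℕ) : SimpleGraph (W ⊕ Fin k) :=
  (H ⊕g ⊤) ⊔ completeBipartiteGraph W (Fin k)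

variable {H : SimpleGraph W} {k : ℕ}

@[simp]
theorem joinComplete_adj_inl_inl {a b : W} :
    (H.joinComplete k).Adj (.inl a) (.inl b) ↔ H.Adj a b := by
  simp [joinComplete]

@[simp]
theorem joinComplete_adj_inr {x : W ⊕ Fin k} {j : Fin k} :
    (H.joinComplete k).Adj x (.inr j) ↔ x ≠ .inr j := by
  cases x <;> simp [joinComplete]

noncomputable def deleteVertsJoinCompleteIso {u : Set (W ⊕ Fin k)}
    (hu : Set.range Sum.inr ⊆ u) :
    ((⊤ : H.Subgraph).deleteVerts (Sum.inl ⁻¹' u)).coe ≃g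
      ((⊤ : (H.joinComplete k).Subgraph).deleteVerts u).coe where
  toEquiv := Equiv.ofBijective (fun a => ⟨.inl a.1, by simpa using a.2⟩) <| by
    refine ⟨fun a b hab => Subtype.ext (Sum.inl_injective (congrArg Subtype.val hab)), ?_⟩
    rintro ⟨x | j, hx⟩
    · exact ⟨⟨x, by simpa using hx⟩, rfl⟩
    · simp only [Subgraph.deleteVerts_verts, Subgraph.verts_top] at hx
      exact absurd (hu ⟨j, rfl⟩) hx.2
  map_rel_iff' := by simp [Equiv.ofBijective]

theorem ncard_oddComponents_deleteVerts_joinComplete_le_one {u : Set (W ⊕ Fin k)} {j : Fin k}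
    (hj : .inr j ∉ u) :
    ((⊤ : (H.joinComplete k).Subgraph).deleteVerts u).coe.oddComponents.ncard ≤ 1 := by
  set K := ((⊤ : (H.joinComplete k).Subgraph).deleteVerts u).coe
  let hub : ((⊤ : (H.joinComplete k).Subgraph).deleteVerts u).verts :=
    ⟨.inr j, by simpa using hj⟩
  have hsub : K.oddComponents ⊆ {K.connectedComponentMk hub} := by
    intro c _
    obtain ⟨x, rfl⟩ := c.exists_rep
    by_cases hx : x = hub
    · rw [hx]; rfl
    · refine ConnectedComponent.eq.2 (Adj.reachable ?_)
      simpa [K, hub, x.2.2, hj] using fun h => hx (Subtype.ext h)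
  simpa using Set.ncard_le_ncard hsub

theorem ncard_eq_ncard_preimage_inl_add {β : Type*} [Finite W] [Finite β] {u : Set (W ⊕ β)}
    (hu : Set.range Sum.inr ⊆ u) : u.ncard = (Sum.inl ⁻¹' u).ncard + Nat.card β := by
  have hsplit : u = Sum.inl '' (Sum.inl ⁻¹' u) ∪ Set.range Sum.inr := by
    ext (a | j)
    · simp
    · simp [hu ⟨j, rfl⟩]
  conv_lhs => rw [hsplit]
  rw [Set.ncard_union_eq (by simp [Set.disjoint_left]),
    Set.ncard_image_of_injective _ Sum.inl_injective,
    Set.ncard_range_of_injective Sum.inr_injective]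

theorem not_isTutteViolator_joinComplete [Finite W] {d : ℕ} (heven : Even (Nat.card W + d))
    (h : ∀ u : Set W, ((⊤ : H.Subgraph).deleteVerts u).coe.oddComponents.ncard ≤ u.ncard + d)
    (u : Set (W ⊕ Fin d)) : ¬ (H.joinComplete d).IsTutteViolator u := by
  rw [IsTutteViolator, not_lt]
  by_cases hu : Set.range Sum.inr ⊆ u
  · rw [(deleteVertsJoinCompleteIso hu).ncard_oddComponents, ncard_eq_ncard_preimage_inl_add hu,
      Nat.card_fin]
    exact h _
  · obtain ⟨_, ⟨j, rfl⟩, hj⟩ := Set.not_subset.1 hu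
    have hle := ncard_oddComponents_deleteVerts_joinComplete_le_one (H := H) hj
    have hpar := ncard_oddComponents_deleteVerts_add_ncard_mod_two (H.joinComplete d) u
    rw [Nat.card_sum, Nat.card_fin] at hpar
    rw [Nat.even_iff] at heven
    omega

theorem Subgraph.IsPerfectMatching.exists_isMatching_of_joinComplete [Finite W]
    {M' : (H.joinComplete k).Subgraph} (hM' : M'.IsPerfectMatching) :
    ∃ M : H.Subgraph, M.IsMatching ∧ Nat.card W ≤ M.verts.ncard + k := by
  let M : H.Subgraph :=
    { verts := {a | ∃ b, M'.Adj (.inl a) (.inl b)}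
      Adj := fun a b => M'.Adj (.inl a) (.inl b)
      adj_sub := fun h => by simpa using M'.adj_sub h
      edge_vert := fun h => ⟨_, h⟩
      symm := ⟨fun _ _ h => h.symm⟩ }
  refine ⟨M, fun a ⟨b, hb⟩ =>
    ⟨b, hb, fun c hc => Sum.inl_injective (hM'.1.eq_of_adj_left hc hb)⟩, ?_⟩
  choose p hp using fun a : W => Subgraph.isPerfectMatching_iff.1 hM' (.inl a) |>.exists
  have hmaps : ∀ a ∈ M.vertsᶜ, p a ∈ Set.range Sum.inr := by
    intro a ha
    cases hpa : p a with
    | inl b => exact absurd ⟨b, hpa ▸ hp a⟩ ha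
    | inr j => exact ⟨j, rfl⟩
  have hinj : Set.InjOn p M.vertsᶜ := fun a _ a' _ h =>
    Sum.inl_injective (hM'.1.eq_of_adj_right (hp a) (h ▸ hp a'))
  have hcompl := Set.ncard_le_ncard_of_injOn p hmaps hinj
  rw [Set.ncard_range_of_injective Sum.inr_injective, Nat.card_fin] at hcompl
  have := Set.ncard_add_ncard_compl M.verts
  omega

/-- The Tutte–Berge formula, in the direction that produces a large matching. -/
theorem exists_isMatching_of_forall_ncard_oddComponents_le [Finite W] (H : SimpleGraph W)
    {d : ℕ}
    (h : ∀ u : Set W, ((⊤ : H.Subgraph).deleteVerts u).coe.oddComponents.ncard ≤ u.ncard + d) :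
    ∃ M : H.Subgraph, M.IsMatching ∧ Nat.card W ≤ M.verts.ncard + d := by
  have hpar := ncard_oddComponents_deleteVerts_add_ncard_mod_two H
  -- Tutte's theorem needs an even number of vertices; if `|W| + d` is odd, the parity of the
  -- number of odd components improves the hypothesis to `d - 1`.
  obtain ⟨d', hd', heven, h'⟩ : ∃ d' ≤ d, Even (Nat.card W + d') ∧
      ∀ u : Set W, ((⊤ : H.Subgraph).deleteVerts u).coe.oddComponents.ncard ≤ u.ncard + d' := by
    by_cases he : Even (Nat.card W + d)
    · exact ⟨d, le_rfl, he, h⟩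
    rw [Nat.even_iff] at he
    refine ⟨d - 1, Nat.sub_le _ _, ?_, fun u => ?_⟩
    · have h0 := h ∅
      have hpar0 := hpar ∅
      rw [Set.ncard_empty] at h0 hpar0
      rw [Nat.even_iff]
      omega
    · have := h u
      have := hpar u
      omega
  obtain ⟨M', hM'⟩ := tutte.2 (not_isTutteViolator_joinComplete heven h')
  obtain ⟨M, hM, hcard⟩ := hM'.exists_isMatching_of_joinComplete
  exact ⟨M, hM, by omega⟩

end TutteBerge

section CubicIncidence

variable {V : Type*} {G : SimpleGraph V}

/-- The simple graph underlying the multigraph on `A` whose edges are the vertices of `B`. -/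
def commonNeighborGraph (G : SimpleGraph V) (A B : Finset V) : SimpleGraph A where
  Adj x y := x ≠ y ∧ ∃ b ∈ B, G.Adj x b ∧ G.Adj y b
  symm := ⟨fun _ _ ⟨hne, b, hb, hx, hy⟩ => ⟨hne.symm, b, hb, hy, hx⟩⟩
  loopless := ⟨fun _ h => h.1 rfl⟩

theorem commonNeighborGraph.connectedComponentMk_eq {A B : Finset V} {u : Set A}
    {w w' : ((⊤ : (commonNeighborGraph G A B).Subgraph).deleteVerts u).verts} {b : V}
    (hb : b ∈ B) (hw : G.Adj w.1 b) (hw' : G.Adj w'.1 b) :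
    ((⊤ : (commonNeighborGraph G A B).Subgraph).deleteVerts u).coe.connectedComponentMk w =
      ((⊤ : (commonNeighborGraph G A B).Subgraph).deleteVerts u).coe.connectedComponentMk w' := by
  by_cases hww' : w = w'
  · rw [hww']
  refine ConnectedComponent.connectedComponentMk_eq_of_adj ?_
  simp only [Subgraph.coe_adj, Subgraph.deleteVerts_adj, Subgraph.top_adj]
  exact ⟨trivial, w.2.2, trivial, w'.2.2, fun h => hww' (Subtype.ext h), b, hb, hw, hw'⟩

variable [DecidableRel G.Adj]

/-- The vertices of `B` with exactly one neighbour in `C`: the edges leaving `C` when `B` is read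
as the edge set of a multigraph on `A`. -/
def cut [DecidableEq V] (G : SimpleGraph V) [DecidableRel G.Adj] (B C : Finset V) : Finset V :=
  B.filter fun b => #(C.filter (G.Adj · b)) = 1

theorem exists_mem_adj_of_mem_cut [DecidableEq V] {B C : Finset V} {b : V}
    (hb : b ∈ G.cut B C) : ∃ x ∈ C, G.Adj x b := by
  obtain ⟨x, hx⟩ := card_pos.1 (by rw [(mem_filter.1 hb).2]; exact one_pos)
  exact ⟨x, mem_filter.1 hx⟩

variable [Fintype V]

theorem eq_or_eq_of_adj_of_degree_le_two [DecidableEq V] {b x y z : V} (hb : G.degree b ≤ 2)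
    (hxy : x ≠ y) (hx : G.Adj x b) (hy : G.Adj y b) (hz : G.Adj z b) : z = x ∨ z = y := by
  by_contra! h
  have hsub : ({x, y, z} : Finset V) ⊆ G.neighborFinset b := by
    simp [insert_subset_iff, hx.symm, hy.symm, hz.symm]
  have := card_le_card hsub
  rw [card_eq_three.2 ⟨x, y, z, hxy, h.1.symm, h.2.symm, rfl⟩,
    card_neighborFinset_eq_degree] at this
  omega

theorem card_le_two_mul_card_image {α : Type*} [Fintype α] [DecidableEq V] {f g : α → V}
    (hf : f.Injective) (hadj : ∀ a, G.Adj (f a) (g a)) (hdeg : ∀ a, G.degree (g a) ≤ 2) :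
    Fintype.card α ≤ 2 * #(univ.image g) := by
  rw [← card_univ]
  refine card_le_mul_card_image _ _ fun b hb => ?_
  obtain ⟨a₀, -, rfl⟩ := mem_image.1 hb
  calc #(univ.filter (g · = g a₀)) ≤ #(G.neighborFinset (g a₀)) := by
        refine card_le_card_of_injOn f (fun a ha => ?_) hf.injOn
        rw [mem_coe, mem_neighborFinset, ← (mem_filter.1 ha).2]
        exact (hadj a).symm
    _ ≤ 2 := by rw [card_neighborFinset_eq_degree]; exact hdeg a₀

theorem exists_pDisjNbrs_of_isMatching [DecidableEq V] {A B : Finset V}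
    (hdeg : ∀ b ∈ B, G.degree b ≤ 2) {M : (commonNeighborGraph G A B).Subgraph}
    (hM : M.IsMatching) : ∃ B' ⊆ B, PDisjNbrs G B' ∧ M.verts.ncard ≤ 2 * #B' := by
  classical
  have hcommon : ∀ e : M.edgeSet, ∃ b ∈ B, ∀ x ∈ (e : Sym2 A), G.Adj x b := by
    rintro ⟨e, he⟩
    induction e using Sym2.ind with
    | _ x y =>
      obtain ⟨-, b, hb, hx, hy⟩ := M.adj_sub he
      exact ⟨b, hb, by simp [hx, hy]⟩
  choose β hβB hβ using hcommon
  let g : M.verts → V := fun v => β (hM.toEdge v)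
  have hg : ∀ v, G.Adj v.1 (g v) := fun v => hβ _ _ (hM.mem_coe_toEdge v.2)
  -- the two neighbours of `g v` are the ends of the matching edge at `v`
  have hnbr : ∀ v a, G.Adj a (g v) → ∃ p : M.verts, p.1.1 = a ∧ g p = g v := by
    intro v a ha
    obtain ⟨w, hvw, -⟩ := hM v.2
    have hw : G.Adj w.1 (g v) := hβ _ _ (by simp [hM.toEdge_eq_of_adj hvw])
    rcases eq_or_eq_of_adj_of_degree_le_two (hdeg _ (hβB _))
      (fun h => (M.adj_sub hvw).1 (Subtype.ext h)) (hg v) hw ha with rfl | rfl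
    · exact ⟨v, rfl, rfl⟩
    · exact ⟨⟨w, hvw.snd_mem⟩, rfl, by simp only [g, ← hM.toEdge_eq_toEdge_of_adj hvw]⟩
  refine ⟨univ.image g, fun b hb => ?_, ?_, ?_⟩
  · obtain ⟨v, -, rfl⟩ := mem_image.1 hb
    exact hβB _
  · rintro _ hb₁ _ hb₂ hne a ⟨ha₁, ha₂⟩
    obtain ⟨v₁, -, rfl⟩ := mem_image.1 hb₁
    obtain ⟨v₂, -, rfl⟩ := mem_image.1 hb₂
    obtain ⟨p₁, hp₁, hg₁⟩ := hnbr v₁ a ha₁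
    obtain ⟨p₂, hp₂, hg₂⟩ := hnbr v₂ a ha₂
    obtain rfl : p₁ = p₂ := Subtype.ext (Subtype.ext (hp₁.trans hp₂.symm))
    exact hne (hg₁.symm.trans hg₂)
  · rw [Set.ncard_eq_toFinset_card', Set.toFinset_card]
    exact card_le_two_mul_card_image (f := fun v => v.1.1)
      (fun _ _ h => Subtype.ext (Subtype.ext h)) hg fun v => hdeg _ (hβB _)

structure IsCubicIncidenceGraph (G : SimpleGraph V) [DecidableRel G.Adj] (A B : Finset V) :
    Prop where
  disjoint : Disjoint A B
  adj : ∀ v w, G.Adj v w → (v ∈ A ∧ w ∈ B) ∨ (v ∈ B ∧ w ∈ A)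
  degree_left : ∀ a ∈ A, G.degree a = 3
  degree_right : ∀ b ∈ B, G.degree b = 2

namespace IsCubicIncidenceGraph

variable {A B : Finset V} (hG : G.IsCubicIncidenceGraph A B)
include hG

theorem mem_right_of_adj {x b : V} (hx : x ∈ A) (h : G.Adj x b) : b ∈ B :=
  (hG.adj x b h).elim (·.2) fun h => absurd h.1 (Finset.disjoint_left.1 hG.disjoint hx)

theorem mem_left_of_adj {x b : V} (hb : b ∈ B) (h : G.Adj x b) : x ∈ A :=
  (hG.adj x b h).elim (·.1) fun h => absurd hb (Finset.disjoint_left.1 hG.disjoint h.2)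

theorem sum_card_filter_adj {C : Finset V} (hC : C ⊆ A) :
    ∑ b ∈ B, #(C.filter (G.Adj · b)) = 3 * #C := by
  have hnbr : ∀ x ∈ C, #(B.filter (G.Adj x ·)) = 3 := fun x hx => by
    rw [← hG.degree_left x (hC hx), ← card_neighborFinset_eq_degree]
    congr 1
    ext b
    simpa using fun h => hG.mem_right_of_adj (hC hx) h
  calc ∑ b ∈ B, #(C.filter (G.Adj · b))
      = ∑ x ∈ C, #(B.filter (G.Adj x ·)) :=
        (sum_card_bipartiteAbove_eq_sum_card_bipartiteBelow (r := G.Adj)).symm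
    _ = 3 * #C := by rw [sum_congr rfl hnbr, sum_const, smul_eq_mul, mul_comm]

theorem card_filter_adj_le_two {b : V} (hb : b ∈ B) (C : Finset V) :
    #(C.filter (G.Adj · b)) ≤ 2 := by
  rw [← hG.degree_right b hb, ← card_neighborFinset_eq_degree]
  exact card_le_card fun x hx => by simpa using (mem_filter.1 hx).2.symm

variable [DecidableEq V]

theorem card_cut_mod_two {C : Finset V} (hC : C ⊆ A) : #(G.cut B C) % 2 = #C % 2 := by
  have hsplit : ∑ b ∈ B, #(C.filter (G.Adj · b)) =
      #(G.cut B C) + 2 * #(B.filter fun b => #(C.filter (G.Adj · b)) = 2) := by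
    rw [cut, card_filter, card_filter, mul_sum, ← sum_add_distrib]
    refine sum_congr rfl fun b hb => ?_
    have := hG.card_filter_adj_le_two hb C
    split_ifs <;> omega
  have := hG.sum_card_filter_adj hC
  omega

theorem card_cut_singleton {x : V} (hx : x ∈ A) : #(G.cut B {x}) = 3 := by
  rw [← hG.degree_left x hx, ← card_neighborFinset_eq_degree]
  congr 1
  ext b
  simp only [cut, mem_filter, mem_neighborFinset, filter_singleton]
  constructor
  · rintro ⟨-, h⟩
    by_contra hxb
    rw [if_neg hxb, card_empty] at h
    exact zero_ne_one h
  · intro h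
    refine ⟨hG.mem_right_of_adj hx h, ?_⟩
    rw [if_pos h, card_singleton]

theorem five_le_two_mul_card_cut_add_card {C : Finset V} (hC : C ⊆ A) (hodd : Odd #C) :
    5 ≤ 2 * #(G.cut B C) + #C := by
  obtain ⟨k, hk⟩ := hodd
  have hpar := hG.card_cut_mod_two hC
  rcases Nat.eq_zero_or_pos k with rfl | hk0
  · obtain ⟨x, rfl⟩ := card_eq_one.1 hk
    have := hG.card_cut_singleton (hC (mem_singleton_self x))
    omega
  · omega

theorem exists_adj_of_mem_cut {C S : Finset V}
    (hclosed : ∀ x ∈ C, ∀ y ∈ A \ S, ∀ b, G.Adj x b → G.Adj y b → y ∈ C)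
    {b : V} (hb : b ∈ G.cut B C) : ∃ z ∈ S, G.Adj z b := by
  obtain ⟨hbB, hone⟩ := mem_filter.1 hb
  obtain ⟨x, hx⟩ := card_eq_one.1 hone
  have hxC : x ∈ C.filter (G.Adj · b) := hx ▸ mem_singleton_self x
  have htwo : 1 < #(G.neighborFinset b) := by
    rw [card_neighborFinset_eq_degree, hG.degree_right b hbB]; omega
  obtain ⟨y, hy, hyx⟩ := exists_mem_ne htwo x
  rw [mem_neighborFinset] at hy
  have hyC : y ∉ C := fun hyC =>
    hyx (mem_singleton.1 (hx ▸ mem_filter.2 ⟨hyC, hy.symm⟩))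
  refine ⟨y, ?_, hy.symm⟩
  by_contra hyS
  exact hyC (hclosed x (mem_filter.1 hxC).1 y
    (mem_sdiff.2 ⟨hG.mem_left_of_adj hbB hy.symm, hyS⟩) b (mem_filter.1 hxC).2 hy.symm)

theorem sum_card_cut_le {ι : Type*} {I : Finset ι} {C : ι → Finset V} {S : Finset V}
    (hS : S ⊆ A) (hCS : ∀ i ∈ I, C i ⊆ A \ S)
    (hclosed : ∀ i ∈ I, ∀ x ∈ C i, ∀ y ∈ A \ S, ∀ b, G.Adj x b → G.Adj y b → y ∈ C i)
    (hdisj : (I : Set ι).PairwiseDisjoint C) : ∑ i ∈ I, #(G.cut B (C i)) ≤ 3 * #S := by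
  -- an edge leaving two of the sets would have three ends
  have hcut_disj : (I : Set ι).PairwiseDisjoint (G.cut B ∘ C) := by
    intro i hi j hj hij
    refine Finset.disjoint_left.2 fun b hbi hbj => ?_
    obtain ⟨x, hx, hxb⟩ := exists_mem_adj_of_mem_cut hbi
    obtain ⟨y, hy, hyb⟩ := exists_mem_adj_of_mem_cut hbj
    obtain ⟨z, hz, hzb⟩ := hG.exists_adj_of_mem_cut (hclosed i hi) hbi
    have hxy : x ≠ y := fun h => Finset.disjoint_left.1 (hdisj hi hj hij) hx (h ▸ hy)
    rcases eq_or_eq_of_adj_of_degree_le_two (hG.degree_right b (mem_filter.1 hbi).1).le hxy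
      hxb hyb hzb with rfl | rfl
    · exact (mem_sdiff.1 (hCS i hi hx)).2 hz
    · exact (mem_sdiff.1 (hCS j hj hy)).2 hz
  calc ∑ i ∈ I, #(G.cut B (C i))
      = #(I.biUnion (G.cut B ∘ C)) := (card_biUnion hcut_disj).symm
    _ ≤ #(S.biUnion fun z => G.neighborFinset z) := by
      refine card_le_card fun b hb => ?_
      obtain ⟨i, hi, hbi⟩ := mem_biUnion.1 hb
      obtain ⟨z, hz, hzb⟩ := hG.exists_adj_of_mem_cut (hclosed i hi) hbi
      exact mem_biUnion.2 ⟨z, hz, (mem_neighborFinset _ _ _).2 hzb⟩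
    _ ≤ ∑ z ∈ S, #(G.neighborFinset z) := card_biUnion_le
    _ = 3 * #S := by
      rw [sum_congr rfl fun z hz => by
        rw [card_neighborFinset_eq_degree, hG.degree_left z (hS hz)], sum_const, smul_eq_mul,
        mul_comm]

theorem five_mul_card_le {ι : Type*} {I : Finset ι} {C : ι → Finset V} {S : Finset V}
    (hS : S ⊆ A) (hCS : ∀ i ∈ I, C i ⊆ A \ S)
    (hclosed : ∀ i ∈ I, ∀ x ∈ C i, ∀ y ∈ A \ S, ∀ b, G.Adj x b → G.Adj y b → y ∈ C i)
    (hdisj : (I : Set ι).PairwiseDisjoint C) (hodd : ∀ i ∈ I, Odd #(C i)) :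
    5 * #I ≤ 5 * #S + #A := by
  have hcomp : ∑ i ∈ I, #(C i) + #S ≤ #A := by
    rw [← card_biUnion hdisj, ← card_sdiff_add_card_eq_card hS]
    exact Nat.add_le_add_right (card_le_card (biUnion_subset.2 hCS)) _
  have hcut := hG.sum_card_cut_le hS hCS hclosed hdisj
  have h5 : ∑ i ∈ I, 5 ≤ ∑ i ∈ I, (2 * #(G.cut B (C i)) + #(C i)) :=
    sum_le_sum fun i hi =>
      hG.five_le_two_mul_card_cut_add_card ((hCS i hi).trans sdiff_subset) (hodd i hi)
  rw [sum_const, smul_eq_mul, sum_add_distrib, ← mul_sum] at h5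
  omega

theorem five_mul_ncard_oddComponents_le (u : Set A) :
    5 * ((⊤ : (commonNeighborGraph G A B).Subgraph).deleteVerts u).coe.oddComponents.ncard ≤
      5 * u.ncard + #A := by
  classical
  set K := ((⊤ : (commonNeighborGraph G A B).Subgraph).deleteVerts u).coe
  let toV : ((⊤ : (commonNeighborGraph G A B).Subgraph).deleteVerts u).verts ↪ V :=
    ⟨fun y => y.1.1, fun _ _ h => Subtype.ext (Subtype.ext h)⟩
  let C : K.ConnectedComponent → Finset V := fun c => c.supp.toFinset.map toV
  let S : Finset V := u.toFinset.map (Function.Embedding.subtype _)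
  have hmemC : ∀ {c x}, x ∈ C c ↔ ∃ y ∈ c.supp, y.1.1 = x := by
    simp only [C, mem_map, Set.mem_toFinset]; rfl
  have hS : S ⊆ A := by simp +contextual [S, subset_iff]
  have hCS : ∀ c, C c ⊆ A \ S := by
    intro c x hx
    obtain ⟨y, -, rfl⟩ := hmemC.1 hx
    simpa [S] using y.2
  have hclosed : ∀ c, ∀ x ∈ C c, ∀ y ∈ A \ S, ∀ b, G.Adj x b → G.Adj y b → y ∈ C c := by
    intro c x hx y hy b hxb hyb
    obtain ⟨w, hw, rfl⟩ := hmemC.1 hx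
    obtain ⟨hyA, hyS⟩ := mem_sdiff.1 hy
    have hyu : (⟨y, hyA⟩ : A) ∉ u := fun h => hyS (mem_map.2 ⟨_, Set.mem_toFinset.2 h, rfl⟩)
    refine hmemC.2 ⟨⟨⟨y, hyA⟩, by simpa using hyu⟩, ?_, rfl⟩
    rw [ConnectedComponent.mem_supp_iff, ← hw]
    exact commonNeighborGraph.connectedComponentMk_eq (hG.mem_right_of_adj w.1.2 hxb) hyb hxb
  have hdisj : (K.oddComponents.toFinset : Set K.ConnectedComponent).PairwiseDisjoint C := by
    intro c _ c' _ hcc'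
    refine Finset.disjoint_left.2 fun x hx hx' => hcc' ?_
    obtain ⟨w, hw, rfl⟩ := hmemC.1 hx
    obtain ⟨w', hw', hww'⟩ := hmemC.1 hx'
    rw [← hw, ← hw', toV.injective hww']
  have hodd : ∀ c ∈ K.oddComponents.toFinset, Odd #(C c) := fun c hc => by
    rw [card_map, ← Set.ncard_eq_toFinset_card']
    simpa using hc
  have := hG.five_mul_card_le hS (fun c _ => hCS c) (fun c _ => hclosed c) hdisj hodd
  rwa [card_map, ← Set.ncard_eq_toFinset_card', ← Set.ncard_eq_toFinset_card'] at this

end IsCubicIncidenceGraph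

end CubicIncidence

end SimpleGraph

open SimpleGraph

theorem stmt_4 {V : Type*} [Fintype V] [DecidableEq V] (G : SimpleGraph V)
    [DecidableRel G.Adj] (A B : Finset V) (hdisj : Disjoint A B)
    (hbip : ∀ v w, G.Adj v w → (v ∈ A ∧ w ∈ B) ∨ (v ∈ B ∧ w ∈ A))
    (hdegA : ∀ a ∈ A, G.degree a = 3) (hdegB : ∀ b ∈ B, G.degree b = 2) :
    ∃ B' ⊆ B, PDisjNbrs G B' ∧ 5 * B'.card ≥ 2 * A.card := by
  have hG : G.IsCubicIncidenceGraph A B := ⟨hdisj, hbip, hdegA, hdegB⟩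
  obtain ⟨M, hM, hcard⟩ :=
    (commonNeighborGraph G A B).exists_isMatching_of_forall_ncard_oddComponents_le
      (d := #A / 5) fun u => by
        have := hG.five_mul_ncard_oddComponents_le u
        omega
  obtain ⟨B', hB'B, hB', hle⟩ := exists_pDisjNbrs_of_isMatching (fun b hb => (hdegB b hb).le) hM
  refine ⟨B', hB'B, hB', ?_⟩
  rw [Nat.card_eq_fintype_card, Fintype.card_coe] at hcard
  omega
end

section
/- Let G be a finite simple 3-regular graph on n vertices. Then for every subset U of the vertex set, the number of connected components of the induced subgraph on the complement of U that have an odd number of vertices is at most |U| + n/5. -/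
/-!
Let `e(C)` be the number of edges between a component `C` of `G − U` and `U`. Counting
degrees inside `C` gives `3|C| = 2|E(C)| + e(C)`, so `e(C)` is odd when `|C|` is odd, and
`|E(C)| ≤ |C|(|C|-1)/2` forces `e(C) ≥ 3` when `|C| ≤ 3`. Hence every odd component either
sends at least three edges to `U`, and `U` receives only `3|U|` edges, or has at least five
vertices.
-/

open Finset

namespace SimpleGraph

variable {V : Type*} [Fintype V] [DecidableEq V] {G : SimpleGraph V} [DecidableRel G.Adj]

namespace ConnectedComponent

variable (C : G.ConnectedComponent)

lemma degree_induce_supp (v : C.supp) : (G.induce C.supp).degree v = G.degree v :=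
  degree_induce_of_neighborSet_subset fun _ hw => C.mem_supp_of_adj_mem_supp v.2 hw

lemma sum_degree_supp_eq_sum_degree_induce :
    ∑ v ∈ C.supp.toFinset, G.degree v = ∑ v : C.supp, (G.induce C.supp).degree v := by
  simp only [degree_induce_supp]
  exact (Finset.sum_subtype _ (fun _ => Set.mem_toFinset) _)

lemma even_sum_degree_supp : Even (∑ v ∈ C.supp.toFinset, G.degree v) := by
  rw [sum_degree_supp_eq_sum_degree_induce, sum_degrees_eq_twice_card_edges]
  exact even_two_mul _

lemma sum_degree_supp_le :
    ∑ v ∈ C.supp.toFinset, G.degree v ≤ #C.supp.toFinset * (#C.supp.toFinset - 1) := by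
  rw [sum_degree_supp_eq_sum_degree_induce, Set.toFinset_card, ← smul_eq_mul, ← card_univ,
    ← sum_const]
  exact sum_le_sum fun v _ => Nat.le_sub_one_of_lt (degree_lt_card_verts v)

lemma sum_sum_supp {M : Type*} [AddCommMonoid M] (f : V → M) :
    ∑ C : G.ConnectedComponent, ∑ v ∈ C.supp.toFinset, f v = ∑ v, f v := by
  classical
  convert sum_fiberwise univ G.connectedComponentMk f using 3
  ext; simp [mem_supp_iff]

lemma five_le_card_supp_of_odd (f : V → ℕ) (hf : ∀ v ∈ C.supp, G.degree v + f v = 3)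
    (hodd : Odd #C.supp.toFinset) (hf2 : ∑ v ∈ C.supp.toFinset, f v ≤ 2) :
    5 ≤ #C.supp.toFinset := by
  have hsum : ∑ v ∈ C.supp.toFinset, G.degree v + ∑ v ∈ C.supp.toFinset, f v =
      3 * #C.supp.toFinset := by
    rw [← sum_add_distrib, sum_congr rfl fun v hv => hf v (Set.mem_toFinset.1 hv), sum_const,
      smul_eq_mul, mul_comm]
  have hle := C.sum_degree_supp_le
  obtain ⟨j, hj⟩ := C.even_sum_degree_supp
  by_contra! hlt
  obtain h | h : #C.supp.toFinset = 1 ∨ #C.supp.toFinset = 3 := by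
    obtain ⟨k, hk⟩ := hodd; omega
  all_goals rw [h] at hle hsum; omega

end ConnectedComponent

theorem ncard_oddComponents_le (f : V → ℕ) (hf : ∀ v, G.degree v + f v = 3) :
    15 * G.oddComponents.ncard ≤ 3 * Fintype.card V + 5 * ∑ v, f v := by
  set odd : Finset G.ConnectedComponent := {C | Odd #C.supp.toFinset}
  have hodd : G.oddComponents.ncard = #odd := by
    simp [odd, Set.ncard_eq_toFinset_card']
  set small : G.ConnectedComponent → Prop := fun C => ∑ v ∈ C.supp.toFinset, f v ≤ 2
  have hsmall : #(odd.filter small) * 5 ≤ Fintype.card V := calc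
    _ ≤ ∑ C ∈ odd.filter small, #C.supp.toFinset := by
      rw [← smul_eq_mul]
      refine card_nsmul_le_sum _ _ _ fun C hC => ?_
      simp only [odd, small, mem_filter, mem_univ, true_and] at hC
      exact C.five_le_card_supp_of_odd f (fun v _ => hf v) hC.1 hC.2
    _ ≤ ∑ C : G.ConnectedComponent, #C.supp.toFinset := sum_le_sum_of_subset (subset_univ _)
    _ = Fintype.card V := by
      simp_rw [card_eq_sum_ones]
      rw [ConnectedComponent.sum_sum_supp, ← card_eq_sum_ones, card_univ]
  have hlarge : #(odd.filter (¬small ·)) * 3 ≤ ∑ v, f v := calc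
    _ ≤ ∑ C ∈ odd.filter (¬small ·), ∑ v ∈ C.supp.toFinset, f v := by
      rw [← smul_eq_mul]
      refine card_nsmul_le_sum _ _ _ fun C hC => ?_
      simp only [small, mem_filter] at hC
      omega
    _ ≤ ∑ C : G.ConnectedComponent, ∑ v ∈ C.supp.toFinset, f v :=
      sum_le_sum_of_subset (subset_univ _)
    _ = ∑ v, f v := ConnectedComponent.sum_sum_supp f
  have := card_filter_add_card_filter_not (s := odd) small
  omega

lemma degree_induce_compl_add_card_filter_adj (U : Finset V) (v : ((U : Set V)ᶜ : Set V)) :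
    (G.induce (U : Set V)ᶜ).degree v + #{u ∈ U | G.Adj v u} = G.degree v := by
  rw [← card_neighborFinset_eq_degree, ← card_map, map_neighborFinset_induce,
    ← card_neighborFinset_eq_degree, ← card_sdiff_add_card_inter (G.neighborFinset v) U]
  congr 2
  · ext; simp
  · ext; simp [and_comm]

omit [DecidableEq V] in
lemma sum_card_filter_adj (U : Finset V) :
    ∑ v, #{u ∈ U | G.Adj v u} = ∑ u ∈ U, G.degree u := by
  simp_rw [card_filter]
  rw [sum_comm]
  refine sum_congr rfl fun u _ => ?_
  rw [← card_filter, ← card_neighborFinset_eq_degree, neighborFinset_eq_filter]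
  simp_rw [adj_comm]

end SimpleGraph

/-- For a finite simple 3-regular graph `G` on `n` vertices and any `U ⊆ V(G)`,
the number of odd connected components of `G − U` is at most `|U| + n/5`. -/
theorem stmt_6 {V : Type*} [Fintype V] [DecidableEq V] (G : SimpleGraph V)
    [DecidableRel G.Adj] (hreg : G.IsRegularOfDegree 3) (U : Finset V) :
    5 * Nat.card {C : (G.induce ((↑U : Set V)ᶜ)).ConnectedComponent // Odd C.supp.ncard}
      ≤ 5 * U.card + Fintype.card V := by
  set H := G.induce ((↑U : Set V)ᶜ)
  have hodd := H.ncard_oddComponents_le (fun v => #{u ∈ U | G.Adj v u}) fun v => by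
    rw [G.degree_induce_compl_add_card_filter_adj, hreg v]
  have hcut : ∑ v : ((U : Set V)ᶜ : Set V), #{u ∈ U | G.Adj v u} ≤ 3 * #U := calc
    _ ≤ ∑ v, #{u ∈ U | G.Adj v u} :=
      (sum_map univ (.subtype _) fun v => #{u ∈ U | G.Adj v u}).symm.le.trans
        (sum_le_sum_of_subset (subset_univ _))
    _ = 3 * #U := by rw [G.sum_card_filter_adj, sum_congr rfl fun u _ => hreg u]; simp [mul_comm]
  have hcard : Fintype.card ((U : Set V)ᶜ : Set V) ≤ Fintype.card V := Fintype.card_subtype_le _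
  change 5 * Nat.card H.oddComponents ≤ _
  rw [Nat.card_coe_set_eq]
  omega
end

section
/- There exists a finite simple bipartite graph G with parts A and B, with |A| = 10 and |B| = 15, in which every vertex of A has degree 3 and every vertex of B has degree 2, such that the maximum size of a subset of B whose vertices have pairwise disjoint neighborhoods equals 4 = 2·|A|/5. (This encodes a 3-regular multigraph on 10 vertices whose maximum matching has size exactly 4.) -/
def edgeList25 : List (Fin 25 × Fin 25) :=
  [(10,0),(10,1),(11,0),(11,4),(12,0),(12,7),
   (13,1),(13,2),(14,1),(14,3),(15,2),(15,3),(16,2),(16,3),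
   (17,4),(17,5),(18,4),(18,6),(19,5),(19,6),(20,5),(20,6),
   (21,7),(21,8),(22,7),(22,9),(23,8),(23,9),(24,8),(24,9)]

def G25 : SimpleGraph (Fin 25) := SimpleGraph.fromRel (fun v w => (v, w) ∈ edgeList25)

instance : DecidableRel G25.Adj := fun v w =>
  decidable_of_iff _ (SimpleGraph.fromRel_adj _ v w).symm

def classes25 : Fin 4 → Finset (Fin 25)
  | 0 => {10, 11, 12}
  | 1 => {13, 14, 15, 16}
  | 2 => {17, 18, 19, 20}
  | 3 => {21, 22, 23, 24}

/-- There is a finite simple bipartite graph with parts of sizes 10 and 15, with all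
degrees 3 on the first part and 2 on the second, in which the maximum size of a subset
of `B` with pairwise disjoint neighborhoods equals `4 = 2 · 10 / 5`. -/
theorem stmt_8 :
    ∃ (V : Type) (_ : Finite V) (G : SimpleGraph V) (A B : Finset V),
      Disjoint A B ∧
      (∀ v w, G.Adj v w → (v ∈ A ∧ w ∈ B) ∨ (v ∈ B ∧ w ∈ A)) ∧
      A.card = 10 ∧ B.card = 15 ∧
      (∀ a ∈ A, (G.neighborSet a).ncard = 3) ∧
      (∀ b ∈ B, (G.neighborSet b).ncard = 2) ∧
      (∃ B' ⊆ B, PDisjNbrs G B' ∧ B'.card = 4) ∧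
      (∀ B' ⊆ B, PDisjNbrs G B' → B'.card ≤ 4) ∧
      4 = 2 * A.card / 5 := by
  refine ⟨Fin 25, Finite.of_fintype _, G25,
    ({0,1,2,3,4,5,6,7,8,9} : Finset (Fin 25)),
    ({10,11,12,13,14,15,16,17,18,19,20,21,22,23,24} : Finset (Fin 25)),
    ?_, ?_, ?_, ?_, ?_, ?_, ?_, ?_, ?_⟩
  · decide
  · decide
  · decide
  · decide
  · -- degrees on A
    have h : ∀ a ∈ ({0,1,2,3,4,5,6,7,8,9} : Finset (Fin 25)),
        (G25.neighborFinset a).card = 3 := by decide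
    intro a ha
    rw [Set.ncard_eq_toFinset_card']
    exact h a ha
  · -- degrees on B
    have h : ∀ b ∈ ({10,11,12,13,14,15,16,17,18,19,20,21,22,23,24} : Finset (Fin 25)),
        (G25.neighborFinset b).card = 2 := by decide
    intro b hb
    rw [Set.ncard_eq_toFinset_card']
    exact h b hb
  · -- a matching of size 4
    refine ⟨{10, 15, 19, 23}, by decide, ?_, by decide⟩
    unfold PDisjNbrs
    decide
  · -- upper bound
    intro B' hsub hpd
    have key : ∀ i : Fin 4, ∀ b₁ ∈ classes25 i, ∀ b₂ ∈ classes25 i, b₁ ≠ b₂ →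
        ∃ a, G25.Adj a b₁ ∧ G25.Adj a b₂ := by decide
    have hone : ∀ i : Fin 4, (B' ∩ classes25 i).card ≤ 1 := by
      intro i
      apply Finset.card_le_one.2
      intro a ha b hb
      by_contra hne
      rcases Finset.mem_inter.1 ha with ⟨haB, haC⟩
      rcases Finset.mem_inter.1 hb with ⟨hbB, hbC⟩
      obtain ⟨v, hv1, hv2⟩ := key i a haC b hbC hne
      exact hpd a haB b hbB hne v ⟨hv1, hv2⟩
    have hcover : ∀ y : Fin 25,
        y ∈ ({10,11,12,13,14,15,16,17,18,19,20,21,22,23,24} : Finset (Fin 25)) →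
        y ∈ classes25 0 ∨ y ∈ classes25 1 ∨ y ∈ classes25 2 ∨ y ∈ classes25 3 := by
      decide
    have hsplit : B' ⊆ (B' ∩ classes25 0) ∪ (B' ∩ classes25 1) ∪
        (B' ∩ classes25 2) ∪ (B' ∩ classes25 3) := by
      intro x hx
      rcases hcover x (hsub hx) with h | h | h | h <;>
        simp [Finset.mem_union, Finset.mem_inter, hx, h]
    calc B'.card ≤ ((B' ∩ classes25 0) ∪ (B' ∩ classes25 1) ∪
          (B' ∩ classes25 2) ∪ (B' ∩ classes25 3)).card := Finset.card_le_card hsplit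
      _ ≤ (B' ∩ classes25 0).card + (B' ∩ classes25 1).card +
          (B' ∩ classes25 2).card + (B' ∩ classes25 3).card := by
            calc _ ≤ _ := Finset.card_union_le _ _
              _ ≤ _ := by
                gcongr
                calc _ ≤ _ := Finset.card_union_le _ _
                  _ ≤ _ := by gcongr; exact Finset.card_union_le _ _
      _ ≤ 1 + 1 + 1 + 1 := by
            have h0 := hone 0; have h1 := hone 1; have h2 := hone 2; have h3 := hone 3
            omega
      _ ≤ 4 := by norm_num
  · decide
end

section
/- There exists a finite simple bipartite graph G with parts A and B, with |A| = 10 and |B| = 15, in which every vertex of A has degree 3 and every vertex of B has degree 2, such that every set S ⊆ B with |S| ≤ 5 for which the bipartite subgraph induced on A ∪ (B \ S) contains a matching saturating A satisfies |N(S)| ≤ 9 = (9/10)·|A|. -/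
/-!
Each vertex of `B` has two neighbours in `A`, so it can be read as an edge of a cubic multigraph
on `A`, and a set `S` with `N(S) = A` and `|S| ≤ 5 = |A| / 2` is a perfect matching of it. Our
multigraph is a hub joined by bridges to three gadgets of three vertices. No edge meets two gadgets
and an edge meets at most two vertices of a gadget, so covering the gadgets already takes
`2 + 2 + 2 = 6` edges.
-/

open Finset

namespace SimpleGraph

variable {α β : Type*}

def bipartiteOfRel (r : α → β → Prop) : SimpleGraph (α ⊕ β) where
  Adj
    | .inl a, .inr b => r a b
    | .inr b, .inl a => r a b
    | _, _ => False
  symm := ⟨by rintro (a | b) (a' | b') h <;> exact h⟩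
  loopless := ⟨by rintro (a | b) h <;> exact h⟩

namespace bipartiteOfRel

variable {r : α → β → Prop}

@[simp] lemma adj_inl_inr {a : α} {b : β} : (bipartiteOfRel r).Adj (.inl a) (.inr b) ↔ r a b :=
  Iff.rfl

@[simp] lemma adj_inr_inl {a : α} {b : β} : (bipartiteOfRel r).Adj (.inr b) (.inl a) ↔ r a b :=
  Iff.rfl

@[simp] lemma not_adj_inl_inl {a a' : α} : ¬(bipartiteOfRel r).Adj (.inl a) (.inl a') :=
  id

@[simp] lemma not_adj_inr_inr {b b' : β} : ¬(bipartiteOfRel r).Adj (.inr b) (.inr b') :=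
  id

lemma ncard_neighborSet_inl (a : α) :
    ((bipartiteOfRel r).neighborSet (.inl a)).ncard = {b | r a b}.ncard := by
  have : (bipartiteOfRel r).neighborSet (.inl a) = .inr '' {b | r a b} := by
    ext (a' | b) <;> simp
  rw [this, Set.ncard_image_of_injective _ Sum.inr_injective]

lemma ncard_neighborSet_inr (b : β) :
    ((bipartiteOfRel r).neighborSet (.inr b)).ncard = {a | r a b}.ncard := by
  have : (bipartiteOfRel r).neighborSet (.inr b) = .inl '' {a | r a b} := by
    ext (a | b') <;> simp
  rw [this, Set.ncard_image_of_injective _ Sum.inl_injective]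

lemma exists_mem_adj_inl_iff {u : Finset (α ⊕ β)} {a : α} :
    (∃ v ∈ u, (bipartiteOfRel r).Adj (.inl a) v) ↔ ∃ b ∈ u.toRight, r a b := by
  constructor
  · rintro ⟨a' | b, hv, h⟩
    · exact h.elim
    · exact ⟨b, mem_toRight.2 hv, h⟩
  · rintro ⟨b, hb, h⟩
    exact ⟨.inr b, mem_toRight.1 hb, h⟩

end bipartiteOfRel

end SimpleGraph

lemma Finset.forall_of_card_le_ncard {α : Type*} {s : Finset α} {p : α → Prop}
    (h : #s ≤ {a | a ∈ s ∧ p a}.ncard) : ∀ a ∈ s, p a := by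
  have : {a | a ∈ s ∧ p a} = ↑s :=
    Set.eq_of_subset_of_ncard_le (fun a ha => ha.1) (by rwa [Set.ncard_coe_finset]) s.finite_toSet
  exact fun a ha => (this.superset ha).2

lemma Sym2.ncard_coe_of_not_isDiag {α : Type*} {z : Sym2 α} (hz : ¬z.IsDiag) :
    (z : Set α).ncard = 2 := by
  classical
  have : (z : Set α) = z.toFinset := by ext; simp
  rw [this, Set.ncard_coe_finset, Sym2.card_toFinset_of_not_isDiag z hz]

lemma Sym2.card_filter_mem_le_two {α : Type*} [DecidableEq α] (z : Sym2 α) (s : Finset α) :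
    #{a ∈ s | a ∈ z} ≤ 2 := by
  induction z using Sym2.ind with
  | _ x y =>
    calc #{a ∈ s | a ∈ s(x, y)} ≤ #{x, y} :=
          card_le_card fun a ha => by simpa using (mem_filter.1 ha).2
      _ ≤ 2 := card_le_two

section EdgeCover

variable {α β : Type*} [DecidableEq α] (ends : β → Sym2 α)

lemma card_le_two_mul_card_filter_exists_mem {T : Finset α} {S : Finset β}
    (hcov : ∀ a ∈ T, ∃ e ∈ S, a ∈ ends e) :
    #T ≤ 2 * #{e ∈ S | ∃ a ∈ T, a ∈ ends e} := by
  have := card_mul_le_card_mul (fun a e => a ∈ ends e) (m := 1) (n := 2)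
    (s := T) (t := {e ∈ S | ∃ a ∈ T, a ∈ ends e}) ?_
    fun e _ => (ends e).card_filter_mem_le_two T
  · linarith
  · intro a ha
    obtain ⟨e, he, hae⟩ := hcov a ha
    exact one_le_card.2 ⟨e, mem_filter.2 ⟨mem_filter.2 ⟨he, a, ha, hae⟩, hae⟩⟩

lemma sum_card_add_one_div_two_le_card [DecidableEq β] {ι : Type*} {s : Finset ι}
    {T : ι → Finset α} {S : Finset β}
    (hcov : ∀ i ∈ s, ∀ a ∈ T i, ∃ e ∈ S, a ∈ ends e)
    (hsep : ∀ e, ∀ i ∈ s, ∀ j ∈ s,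
      (∃ a ∈ T i, a ∈ ends e) → (∃ a ∈ T j, a ∈ ends e) → i = j) :
    ∑ i ∈ s, (#(T i) + 1) / 2 ≤ #S := by
  set touching : ι → Finset β := fun i => {e ∈ S | ∃ a ∈ T i, a ∈ ends e}
  have hdisj : (s : Set ι).PairwiseDisjoint touching := by
    intro i hi j hj hij
    refine disjoint_left.2 fun e hei hej => hij ?_
    exact hsep e i hi j hj (mem_filter.1 hei).2 (mem_filter.1 hej).2
  calc ∑ i ∈ s, (#(T i) + 1) / 2
      ≤ ∑ i ∈ s, #(touching i) := sum_le_sum fun i hi => by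
        have : #(T i) ≤ 2 * #(touching i) :=
          card_le_two_mul_card_filter_exists_mem ends (hcov i hi)
        omega
    _ = #(s.biUnion touching) := (card_biUnion hdisj).symm
    _ ≤ #S := card_le_card (biUnion_subset.2 fun i _ => filter_subset _ _)

end EdgeCover

namespace CubicNoPerfectMatching

-- `B`-vertex `e` is adjacent to the two endpoints of `ends e`.
def ends : Fin 15 → Sym2 (Fin 10) :=
  ![s(0, 3), s(0, 6), s(0, 9), s(1, 2), s(1, 2), s(1, 3), s(2, 3), s(4, 5), s(4, 5), s(4, 6),
    s(5, 6), s(7, 8), s(7, 8), s(7, 9), s(8, 9)]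

def gadget : Fin 3 → Finset (Fin 10) := ![{1, 2, 3}, {4, 5, 6}, {7, 8, 9}]

lemma ncard_setOf_mem_ends (a : Fin 10) : {e | a ∈ ends e}.ncard = 3 := by
  rw [Set.ncard_eq_toFinset_card']; revert a; decide

lemma not_isDiag_ends (e : Fin 15) : ¬(ends e).IsDiag := by
  revert e; decide

lemma six_le_card_of_forall_exists_mem_ends {S : Finset (Fin 15)}
    (hcov : ∀ a, ∃ e ∈ S, a ∈ ends e) : 6 ≤ #S := by
  have key := sum_card_add_one_div_two_le_card ends (s := univ) (T := gadget)
    (fun _ _ a _ => hcov a) (by decide)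
  have : ∀ i, #(gadget i) = 3 := by decide
  simpa [this] using key

end CubicNoPerfectMatching

open SimpleGraph CubicNoPerfectMatching in
/-- There is a finite simple bipartite graph with parts of sizes `|A| = 10` and
`|B| = 15`, all degrees 3 on `A` and 2 on `B`, in which every feasible 2PPM solution
`S` (i.e. `|S| ≤ 5` and the induced subgraph on `A ∪ (B \ S)` has an `A`-saturating
matching) satisfies `|N(S)| ≤ 9 = (9/10)·|A|`. -/
theorem stmt_10 :
    ∃ (V : Type) (_ : Finite V) (G : SimpleGraph V) (A B : Finset V),
      Disjoint A B ∧
      (∀ v w, G.Adj v w → (v ∈ A ∧ w ∈ B) ∨ (v ∈ B ∧ w ∈ A)) ∧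
      A.card = 10 ∧ B.card = 15 ∧
      (∀ a ∈ A, (G.neighborSet a).ncard = 3) ∧
      (∀ b ∈ B, (G.neighborSet b).ncard = 2) ∧
      (∀ S ⊆ B, S.card ≤ 5 →
        (∃ f : V → V, Set.InjOn f ↑A ∧
          ∀ a ∈ A, f a ∈ B ∧ f a ∉ S ∧ G.Adj a (f a)) →
        {a : V | a ∈ A ∧ ∃ b ∈ S, G.Adj a b}.ncard ≤ 9) := by
  refine ⟨Fin 10 ⊕ Fin 15, inferInstance, bipartiteOfRel (fun a e => a ∈ ends e),
    univ.map .inl, univ.map .inr, disjoint_map_inl_map_inr _ _, ?_, by simp, by simp, ?_, ?_, ?_⟩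
  · rintro (a | e) (a' | e') h <;> simp_all
  · simp [bipartiteOfRel.ncard_neighborSet_inl, ncard_setOf_mem_ends]
  · simp [bipartiteOfRel.ncard_neighborSet_inr, Sym2.ncard_coe_of_not_isDiag, not_isDiag_ends]
  · intro S _ hS _
    by_contra! h
    have hA : #(univ.map .inl : Finset (Fin 10 ⊕ Fin 15)) = 10 := by simp
    have hcov : ∀ a, ∃ e ∈ S.toRight, a ∈ ends e := fun a =>
      bipartiteOfRel.exists_mem_adj_inl_iff.1 <|
        forall_of_card_le_ncard (hA.trans_le h) _ (mem_map_of_mem .inl (mem_univ a))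
    have := six_le_card_of_forall_exists_mem_ends hcov
    have := card_toRight_le (u := S)
    omega
end

section
/- Let d ≥ 4 and let G be a finite simple bipartite graph with parts A and B such that every vertex of A has degree d and every vertex of B has degree 2, and let n = |A| (so |B| = dn/2). Then there exists a set S ⊆ B with |S| ≤ |B| − n such that N(S) = A and the bipartite subgraph of G induced on A ∪ (B \ S) contains a matching saturating every vertex of A. Consequently, OPT_2PPM = n. -/
open Finset

theorem stmt_11 {V : Type*} [Fintype V] [DecidableEq V] (G : SimpleGraph V)
    [DecidableRel G.Adj] (A B : Finset V) (hdisj : Disjoint A B)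
    (hbip : ∀ v w, G.Adj v w → (v ∈ A ∧ w ∈ B) ∨ (v ∈ B ∧ w ∈ A))
    (d : ℕ) (hd : 4 ≤ d)
    (hdegA : ∀ a ∈ A, G.degree a = d) (hdegB : ∀ b ∈ B, G.degree b = 2) :
    (∃ S ⊆ B, S.card ≤ B.card - A.card ∧ nbhd G A S = A ∧ SatMatch G A (B \ S)) ∧
    (∀ S ⊆ B, S.card ≤ B.card - A.card → SatMatch G A (B \ S) →
      (nbhd G A S).card ≤ A.card) := by
  classical
  -- Key counting lemma: for T ⊆ A, 2|T| ≤ |N(T)|.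
  have key : ∀ T ⊆ A, 2 * T.card ≤ (T.biUnion (fun a => G.neighborFinset a)).card := by
    intro T hT
    set U := T.biUnion (fun a => G.neighborFinset a) with hU
    have hUB : U ⊆ B := by
      intro b hb
      obtain ⟨a, ha, hab⟩ := Finset.mem_biUnion.mp hb
      have hadj : G.Adj a b := (SimpleGraph.mem_neighborFinset G a b).mp hab
      rcases hbip a b hadj with ⟨_, h⟩ | ⟨h1, _⟩
      · exact h
      · exact absurd h1 (Finset.disjoint_left.mp hdisj (hT ha))
    have e2 : ∀ a ∈ T, G.neighborFinset a = U.filter (fun b => G.Adj a b) := by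
      intro a ha
      ext b
      simp only [Finset.mem_filter, SimpleGraph.mem_neighborFinset]
      constructor
      · intro h
        exact ⟨Finset.mem_biUnion.mpr ⟨a, ha, (SimpleGraph.mem_neighborFinset G a b).mpr h⟩, h⟩
      · exact fun h => h.2
    have hdmul : d * T.card ≤ 2 * U.card := by
      calc d * T.card = ∑ _a ∈ T, d := by rw [Finset.sum_const, smul_eq_mul, mul_comm]
        _ = ∑ a ∈ T, (G.neighborFinset a).card := by
            refine Finset.sum_congr rfl fun a ha => ?_
            rw [SimpleGraph.card_neighborFinset_eq_degree, hdegA a (hT ha)]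
        _ = ∑ a ∈ T, (U.filter (fun b => G.Adj a b)).card := by
            refine Finset.sum_congr rfl fun a ha => by rw [e2 a ha]
        _ = ∑ a ∈ T, ∑ b ∈ U, (if G.Adj a b then 1 else 0) := by
            refine Finset.sum_congr rfl fun a _ => ?_
            rw [Finset.card_filter]
        _ = ∑ b ∈ U, ∑ a ∈ T, (if G.Adj a b then 1 else 0) := Finset.sum_comm
        _ = ∑ b ∈ U, (T.filter (fun a => G.Adj a b)).card := by
            refine Finset.sum_congr rfl fun b _ => ?_
            rw [Finset.card_filter]
        _ ≤ ∑ _b ∈ U, 2 := by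
            refine Finset.sum_le_sum fun b hb => ?_
            have hsub : T.filter (fun a => G.Adj a b) ⊆ G.neighborFinset b := by
              intro a ha
              exact (SimpleGraph.mem_neighborFinset G b a).mpr
                ((Finset.mem_filter.mp ha).2.symm)
            calc (T.filter (fun a => G.Adj a b)).card
                ≤ (G.neighborFinset b).card := Finset.card_le_card hsub
              _ = 2 := by
                  rw [SimpleGraph.card_neighborFinset_eq_degree, hdegB b (hUB hb)]
        _ = 2 * U.card := by rw [Finset.sum_const, smul_eq_mul, mul_comm]
    have h4 : 4 * T.card ≤ d * T.card := Nat.mul_le_mul_right _ hd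
    omega
  -- Neighborhoods of A lie in B
  have hNB : ∀ a ∈ A, G.neighborFinset a ⊆ B := by
    intro a ha b hb
    have hadj : G.Adj a b := (SimpleGraph.mem_neighborFinset G a b).mp hb
    rcases hbip a b hadj with ⟨_, h⟩ | ⟨h1, _⟩
    · exact h
    · exact absurd h1 (Finset.disjoint_left.mp hdisj ha)
  -- |B| ≥ 2|A|
  have hBA : 2 * A.card ≤ B.card := by
    refine le_trans (key A (Finset.Subset.refl A)) (Finset.card_le_card ?_)
    intro b hb
    obtain ⟨a, ha, hab⟩ := Finset.mem_biUnion.mp hb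
    exact hNB a ha hab
  -- Hall's theorem on doubled index set
  have hall : ∃ f : {x : V × Bool // x.1 ∈ A} → V, Function.Injective f ∧
      ∀ x : {x : V × Bool // x.1 ∈ A}, f x ∈ G.neighborFinset x.1.1 := by
    rw [← Finset.all_card_le_biUnion_card_iff_exists_injective]
    intro s
    set T := s.image (fun x => x.1.1) with hT
    have hTA : T ⊆ A := by
      intro a ha
      obtain ⟨x, _, rfl⟩ := Finset.mem_image.mp ha
      exact x.2
    have hs2 : s.card ≤ 2 * T.card := by
      have hinj : Set.InjOn (fun x : {x : V × Bool // x.1 ∈ A} => x.1) ↑s :=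
        fun x _ y _ h => Subtype.ext h
      have := Finset.card_image_of_injOn hinj
      have hsub : s.image (fun x => x.1) ⊆ T ×ˢ Finset.univ := by
        intro p hp
        obtain ⟨x, hx, rfl⟩ := Finset.mem_image.mp hp
        exact Finset.mem_product.mpr ⟨Finset.mem_image.mpr ⟨x, hx, rfl⟩, Finset.mem_univ _⟩
      calc s.card = (s.image (fun x => x.1)).card := this.symm
        _ ≤ (T ×ˢ (Finset.univ : Finset Bool)).card := Finset.card_le_card hsub
        _ = 2 * T.card := by
            rw [Finset.card_product, Finset.card_univ, Fintype.card_bool]; ring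
    have hbieq : s.biUnion (fun x => G.neighborFinset x.1.1) = T.biUnion (fun a => G.neighborFinset a) := by
      rw [hT, Finset.image_biUnion]
    calc s.card ≤ 2 * T.card := hs2
      _ ≤ (T.biUnion (fun a => G.neighborFinset a)).card := key T hTA
      _ = (s.biUnion (fun x => G.neighborFinset x.1.1)).card := by rw [hbieq]
  obtain ⟨f, hfinj, hfmem⟩ := hall
  constructor
  · -- existence part
    set S := A.attach.image (fun a => f ⟨(a.1, true), a.2⟩) with hS
    have hSB : S ⊆ B := by
      intro b hb
      obtain ⟨a, _, rfl⟩ := Finset.mem_image.mp hb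
      exact hNB a.1 a.2 (hfmem ⟨(a.1, true), a.2⟩)
    have hScard : S.card ≤ A.card := by
      calc S.card ≤ A.attach.card := Finset.card_image_le
        _ = A.card := Finset.card_attach
    refine ⟨S, hSB, by omega, ?_, ?_⟩
    · -- nbhd G A S = A
      apply Finset.Subset.antisymm (Finset.filter_subset _ _)
      intro a ha
      refine Finset.mem_filter.mpr ⟨ha, ⟨f ⟨(a, true), ha⟩, ?_, ?_⟩⟩
      · exact Finset.mem_image.mpr ⟨⟨a, ha⟩, Finset.mem_attach _ _, rfl⟩
      · exact (SimpleGraph.mem_neighborFinset G a _).mp (hfmem ⟨(a, true), ha⟩)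
    · -- SatMatch
      refine ⟨fun a => if h : a ∈ A then f ⟨(a, false), h⟩ else a, ?_, ?_⟩
      · intro a₁ h₁ a₂ h₂ heq
        simp only [Finset.mem_coe] at h₁ h₂
        simp only [dif_pos h₁, dif_pos h₂] at heq
        have := hfinj heq
        exact congrArg (fun x => x.1.1) this
      · intro a ha
        simp only [dif_pos ha]
        refine ⟨Finset.mem_sdiff.mpr ⟨hNB a ha (hfmem ⟨(a, false), ha⟩), ?_⟩, ?_⟩
        · intro hmem
          obtain ⟨a', _, heq⟩ := Finset.mem_image.mp hmem
          have := hfinj heq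
          have hb : ((a'.1, true) : V × Bool) = (a, false) := congrArg Subtype.val this
          simpa using congrArg Prod.snd hb
        · exact (SimpleGraph.mem_neighborFinset G a _).mp (hfmem ⟨(a, false), ha⟩)
  · -- trivial upper bound
    intro S _ _ _
    exact Finset.card_le_card (Finset.filter_subset _ _)
end

section
/- Let G be a finite simple bipartite graph with parts A and B such that every vertex of B has degree 2, and let T ⊆ B. If T' ⊆ T is maximal among subsets of T whose vertices have pairwise disjoint neighborhoods, then every vertex b ∈ T \ T' has at most one neighbor outside N(T'), and consequently |N(T)| ≤ |T| + |T'|. -/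
open Finset

theorem stmt_16 {V : Type*} [Fintype V] [DecidableEq V] (G : SimpleGraph V)
    [DecidableRel G.Adj] (A B : Finset V) (hdisj : Disjoint A B)
    (hbip : ∀ v w, G.Adj v w → (v ∈ A ∧ w ∈ B) ∨ (v ∈ B ∧ w ∈ A))
    (hdegB : ∀ b ∈ B, G.degree b = 2)
    (T : Finset V) (hT : T ⊆ B)
    (T' : Finset V) (hT' : T' ⊆ T) (hpd : PDisjNbrs G T')
    (hmax : ∀ b ∈ T \ T', ¬ PDisjNbrs G (insert b T')) :
    (∀ b ∈ T \ T', (A.filter fun a => a ∉ nbhd G A T' ∧ G.Adj a b).card ≤ 1) ∧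
    (nbhd G A T).card ≤ T.card + T'.card := by
  -- any neighbor of an element of B lies in A
  have hAnb : ∀ a b, b ∈ B → G.Adj a b → a ∈ A := by
    intro a b hb hab
    rcases hbip a b hab with ⟨ha, _⟩ | ⟨ha, hbA⟩
    · exact ha
    · exact absurd hb (Finset.disjoint_left.mp hdisj hbA)
  have part1 : ∀ b ∈ T \ T',
      (A.filter fun a => a ∉ nbhd G A T' ∧ G.Adj a b).card ≤ 1 := by
    intro b hb
    have hbT : b ∈ T := (Finset.mem_sdiff.mp hb).1
    have hbT' : b ∉ T' := (Finset.mem_sdiff.mp hb).2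
    -- there is a neighbor a of b which is in nbhd G A T'
    have key : ∃ a, G.Adj a b ∧ a ∈ nbhd G A T' := by
      have h := hmax b hb
      unfold PDisjNbrs at h
      push_neg at h
      obtain ⟨b₁, hb₁, b₂, hb₂, hne, a, h1, h2⟩ := h
      rcases Finset.mem_insert.mp hb₁ with rfl | hb₁'
      · have hb₂' : b₂ ∈ T' := by
          rcases Finset.mem_insert.mp hb₂ with rfl | h
          · exact absurd rfl hne
          · exact h
        refine ⟨a, h1, ?_⟩
        have haA : a ∈ A := hAnb a b₂ (hT (hT' hb₂')) h2
        exact Finset.mem_filter.mpr ⟨haA, b₂, hb₂', h2⟩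
      · rcases Finset.mem_insert.mp hb₂ with rfl | hb₂'
        · refine ⟨a, h2, ?_⟩
          have haA : a ∈ A := hAnb a b₁ (hT (hT' hb₁')) h1
          exact Finset.mem_filter.mpr ⟨haA, b₁, hb₁', h1⟩
        · exact absurd ⟨h1, h2⟩ (hpd b₁ hb₁' b₂ hb₂' hne a)
    obtain ⟨a, hab, haN⟩ := key
    have hsub : (A.filter fun a' => a' ∉ nbhd G A T' ∧ G.Adj a' b)
        ⊆ (G.neighborFinset b).erase a := by
      intro a' ha'
      obtain ⟨_, hnN, hadj⟩ := Finset.mem_filter.mp ha'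
      refine Finset.mem_erase.mpr ⟨?_, ?_⟩
      · rintro rfl; exact hnN haN
      · exact SimpleGraph.mem_neighborFinset _ _ _ |>.mpr hadj.symm
    calc ((A.filter fun a' => a' ∉ nbhd G A T' ∧ G.Adj a' b)).card
        ≤ ((G.neighborFinset b).erase a).card := Finset.card_le_card hsub
      _ = (G.neighborFinset b).card - 1 := Finset.card_erase_of_mem
          (SimpleGraph.mem_neighborFinset _ _ _ |>.mpr hab.symm)
      _ = 1 := by rw [G.card_neighborFinset_eq_degree, hdegB b (hT hbT)]
  refine ⟨part1, ?_⟩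
  -- card of nbhd of T'
  have hN' : (nbhd G A T').card ≤ 2 * T'.card := by
    have heq : nbhd G A T' = T'.biUnion (fun b' => A.filter fun a => G.Adj a b') := by
      ext a
      simp only [nbhd, Finset.mem_filter, Finset.mem_biUnion]
      tauto
    rw [heq]
    calc (T'.biUnion (fun b' => A.filter fun a => G.Adj a b')).card
        ≤ ∑ b' ∈ T', (A.filter fun a => G.Adj a b').card := Finset.card_biUnion_le
      _ ≤ ∑ b' ∈ T', 2 := by
          refine Finset.sum_le_sum fun b' hb' => ?_
          have hsub : (A.filter fun a => G.Adj a b') ⊆ G.neighborFinset b' := by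
            intro a ha
            exact SimpleGraph.mem_neighborFinset _ _ _ |>.mpr
              ((Finset.mem_filter.mp ha).2).symm
          calc (A.filter fun a => G.Adj a b').card ≤ (G.neighborFinset b').card :=
                Finset.card_le_card hsub
            _ = 2 := by rw [G.card_neighborFinset_eq_degree, hdegB b' (hT (hT' hb'))]
      _ = 2 * T'.card := by rw [Finset.sum_const, smul_eq_mul, mul_comm]
  have hcover : nbhd G A T ⊆ nbhd G A T' ∪
      (T \ T').biUnion (fun b => A.filter fun a => a ∉ nbhd G A T' ∧ G.Adj a b) := by
    intro a ha
    obtain ⟨haA, b, hbT, hadj⟩ := Finset.mem_filter.mp ha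
    by_cases hN : a ∈ nbhd G A T'
    · exact Finset.mem_union_left _ hN
    · refine Finset.mem_union_right _ (Finset.mem_biUnion.mpr ⟨b, ?_, ?_⟩)
      · refine Finset.mem_sdiff.mpr ⟨hbT, fun hbT' => hN ?_⟩
        exact Finset.mem_filter.mpr ⟨haA, b, hbT', hadj⟩
      · exact Finset.mem_filter.mpr ⟨haA, hN, hadj⟩
  have hrest : ((T \ T').biUnion
      (fun b => A.filter fun a => a ∉ nbhd G A T' ∧ G.Adj a b)).card ≤ (T \ T').card := by
    calc ((T \ T').biUnion _).card
        ≤ ∑ b ∈ T \ T', (A.filter fun a => a ∉ nbhd G A T' ∧ G.Adj a b).card :=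
          Finset.card_biUnion_le
      _ ≤ ∑ b ∈ T \ T', 1 := Finset.sum_le_sum part1
      _ = (T \ T').card := by rw [Finset.sum_const, smul_eq_mul, mul_one]
  have hsd : (T \ T').card = T.card - T'.card := Finset.card_sdiff_of_subset hT'
  have hle : T'.card ≤ T.card := Finset.card_le_card hT'
  calc (nbhd G A T).card
      ≤ (nbhd G A T' ∪ (T \ T').biUnion _).card := Finset.card_le_card hcover
    _ ≤ (nbhd G A T').card + ((T \ T').biUnion _).card := Finset.card_union_le _ _
    _ ≤ 2 * T'.card + (T \ T').card := Nat.add_le_add hN' hrest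
    _ ≤ T.card + T'.card := by omega
end
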